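/- arXiv:math/0404162 — 7 statements merged into one kernel-verified Lean document; each statement's English description precedes it below -/
import Mathlib

section
/- Let G be a finitely generated group whose abelianization has no 2-torsion (i.e., a·a = 1 implies a = 1 in the abelianization of G). If ρ: G → Sp(1) is a projective representation whose associated cocycle c is not a coboundary, then ρ is irreducible: the only unit quaternions that commute with ρ(g) for every g ∈ G are 1 and −1. -/
/-! If a unit quaternion `q ≠ ±1` commuted with the image of `ρ`, that image would lie in the
copy `ℝ[q] ≅ ℂ` of the complex numbers, so `ρ = Φ ∘ ζ` for some `ζ : G → ℂˣ` whose coboundary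
takes values in `{±1}`. Then `ζ²` is a character of `G`, i.e. of its abelianization `A`. Squaring
is injective on `A` and `ℂˣ` is divisible, hence an injective `ℤ`-module, so `ζ²` has a square root
`χ` among the characters. Now `ζ / χ` is `±1`-valued with the same coboundary as `ζ`, so the cocycle
of `ρ` is a coboundary. -/

noncomputable section

open Quaternion

/-- A projective representation of `G` in the group `Sp(1)` of unit quaternions:
a function with values of norm one such that `ρ(gh)ρ(h)⁻¹ρ(g)⁻¹ ∈ {±1}`. -/
def IsProjRep {G : Type*} [Group G] (ρ : G → ℍ[ℝ]) : Prop :=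
  (∀ g : G, ‖ρ g‖ = 1) ∧
    ∀ g h : G, ρ (g * h) * (ρ h)⁻¹ * (ρ g)⁻¹ = 1 ∨ ρ (g * h) * (ρ h)⁻¹ * (ρ g)⁻¹ = -1

/-- The cocycle associated with a projective representation. -/
def cocycleOf {G : Type*} [Group G] (ρ : G → ℍ[ℝ]) (g h : G) : ℍ[ℝ] :=
  ρ (g * h) * (ρ h)⁻¹ * (ρ g)⁻¹

noncomputable instance Additive.divisibleByInt {M : Type*} [Group M] [RootableBy M ℤ] :
    DivisibleBy (Additive M) ℤ where
  div a n := .ofMul (RootableBy.root a.toMul n)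
  div_zero _ := congrArg Additive.ofMul (RootableBy.root_zero _)
  div_cancel _ hn := congrArg Additive.ofMul (RootableBy.root_cancel _ hn)

noncomputable instance IsAlgClosed.rootableByNatUnits {K : Type*} [Field K] [IsAlgClosed K] :
    RootableBy Kˣ ℕ :=
  rootableByOfPowLeftSurj _ _ fun {n} hn x => by
    obtain ⟨z, hz⟩ := IsAlgClosed.exists_pow_nat_eq (x : K) (Nat.pos_of_ne_zero hn)
    have hz0 : z ≠ 0 := fun h => x.ne_zero (by rw [← hz, h, zero_pow hn])
    exact ⟨Units.mk0 z hz0, Units.ext (by simp [hz])⟩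

noncomputable instance IsAlgClosed.rootableByIntUnits {K : Type*} [Field K] [IsAlgClosed K] :
    RootableBy Kˣ ℤ :=
  Group.rootableByIntOfRootableByNat _

theorem MonoidHom.exists_sq_eq {A M : Type*} [CommGroup A] [CommGroup M] [RootableBy M ℤ]
    (hA : ∀ a : A, a * a = 1 → a = 1) (σ : A →* M) : ∃ τ : A →* M, ∀ a, τ a ^ 2 = σ a := by
  have hsq : Function.Injective (powMonoidHom 2 : A →* A).toAdditive :=
    (injective_iff_map_eq_zero _).mpr fun a ha =>
      hA a.toMul (by simpa [sq] using congrArg Additive.toMul ha)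
  obtain ⟨H, hH⟩ := (Module.Baer.of_divisible (Additive M)).extension_property_addMonoidHom _ hsq
    σ.toAdditive
  refine ⟨MonoidHom.toAdditive.symm H, fun a => ?_⟩
  rw [← map_pow]
  exact congrArg Additive.toMul (DFunLike.congr_fun hH (Additive.ofMul a))

theorem Quaternion.eq_one_or_eq_neg_one_of_im_eq_zero {q : ℍ[ℝ]} (hq : ‖q‖ = 1)
    (him : q.im = 0) : q = 1 ∨ q = -1 := by
  have hre : (q.re : ℍ[ℝ]) = q := by simpa [him] using re_add_im q
  rw [← hre, norm_coe, Real.norm_eq_abs] at hq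
  rcases abs_eq zero_le_one |>.mp hq with h | h
  · left; rw [← hre, h, coe_one]
  · right; rw [← hre, h, coe_neg, coe_one]

theorem Quaternion.exists_im_eq_smul_of_commute {R : Type*} [Field R] [LinearOrder R]
    [IsStrictOrderedRing R] {p q : ℍ[R]} (hq : q.im ≠ 0) (h : Commute p q) :
    ∃ t : R, p.im = t • q.im := by
  have hN : 0 < q.imI ^ 2 + q.imJ ^ 2 + q.imK ^ 2 := by
    simpa [normSq_def'] using normSq_nonneg.lt_of_ne (Ne.symm (normSq_ne_zero.mpr hq))
  have eI := congrArg (·.imI) h.eq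
  have eJ := congrArg (·.imJ) h.eq
  have eK := congrArg (·.imK) h.eq
  simp only [imI_mul, imJ_mul, imK_mul] at eI eJ eK
  refine ⟨(p.imI * q.imI + p.imJ * q.imJ + p.imK * q.imK) / (q.imI ^ 2 + q.imJ ^ 2 + q.imK ^ 2),
    ?_⟩
  ext <;> simp only [re_im, imI_im, imJ_im, imK_im, re_smul, imI_smul, imJ_smul, imK_smul,
    smul_eq_mul] <;> field_simp
  · simp
  · linear_combination (q.imJ / 2) * eK - (q.imK / 2) * eJ
  · linear_combination (q.imK / 2) * eI - (q.imI / 2) * eK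
  · linear_combination (q.imI / 2) * eJ - (q.imJ / 2) * eI

theorem Quaternion.exists_algHom_complex_of_commute {q : ℍ[ℝ]} (hq : q.im ≠ 0) :
    ∃ Φ : ℂ →ₐ[ℝ] ℍ[ℝ], ∀ p, Commute p q → ∃ z, Φ z = p := by
  have hr : ‖q.im‖ ≠ 0 := norm_ne_zero_iff.mpr hq
  have hu : (‖q.im‖⁻¹ • q.im) * (‖q.im‖⁻¹ • q.im) = -1 := by
    rw [smul_mul_smul_comm, ← sq, ← sq, im_sq, normSq_eq_norm_mul_self]
    ext <;> simp
    field_simp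
  refine ⟨Complex.liftAux _ hu, fun p hp => ?_⟩
  obtain ⟨t, ht⟩ := exists_im_eq_smul_of_commute hq hp
  refine ⟨⟨p.re, t * ‖q.im‖⟩, ?_⟩
  rw [Complex.liftAux_apply, smul_smul, mul_assoc, mul_inv_cancel₀ hr, mul_one, ← ht]
  exact re_add_im p

theorem exists_sq_eq_one_of_sq_coboundary_eq_one {G M : Type*} [Group G] [CommGroup M]
    [RootableBy M ℤ] (h2 : ∀ a : Abelianization G, a * a = 1 → a = 1) (ζ : G → M)
    (hζ : ∀ g h, (ζ (g * h) * (ζ h)⁻¹ * (ζ g)⁻¹) ^ 2 = 1) :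
    ∃ β : G → M, (∀ g, β g ^ 2 = 1) ∧
      ∀ g h, ζ (g * h) * (ζ h)⁻¹ * (ζ g)⁻¹ = β g * β h * (β (g * h))⁻¹ := by
  let σ : G →* M := MonoidHom.mk' (fun g => ζ g ^ 2) fun g h => by
    have := hζ g h
    rw [mul_pow, mul_pow, inv_pow, inv_pow, mul_inv_eq_one, mul_inv_eq_iff_eq_mul] at this
    rw [this, mul_comm]
  obtain ⟨τ, hτ⟩ := (Abelianization.lift σ).exists_sq_eq h2
  set χ : G →* M := τ.comp Abelianization.of
  have hβ2 : ∀ g, (ζ g / χ g) ^ 2 = 1 := fun g => by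
    rw [div_pow, div_eq_one]
    exact ((hτ _).trans (Abelianization.lift_apply_of σ g)).symm
  have hβinv : ∀ g, (ζ g / χ g)⁻¹ = ζ g / χ g := fun g =>
    inv_eq_of_mul_eq_one_left (by rw [← sq, hβ2])
  refine ⟨fun g => ζ g / χ g, hβ2, fun g h => ?_⟩
  dsimp only
  rw [hβinv (g * h), ← hβinv g, ← hβinv h, map_mul]
  apply Additive.ofMul.injective
  simp only [ofMul_mul, ofMul_inv, ofMul_div]
  abel

theorem irreducible_of_cocycle_not_coboundary_general {G : Type*} [Group G]
    (h2 : ∀ a : Abelianization G, a * a = 1 → a = 1)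
    (ρ : G → ℍ[ℝ]) (hρ : IsProjRep ρ)
    (hcob : ¬ ∃ ε : G → ℍ[ℝ], (∀ g : G, ε g = 1 ∨ ε g = -1) ∧
      ∀ g h : G, cocycleOf ρ g h = ε g * ε h * (ε (g * h))⁻¹) :
    ∀ q : ℍ[ℝ], ‖q‖ = 1 → (∀ g : G, q * ρ g = ρ g * q) → q = 1 ∨ q = -1 := by
  intro q hq hcomm
  by_contra hne
  obtain ⟨Φ, hΦ⟩ := exists_algHom_complex_of_commute
    (mt (eq_one_or_eq_neg_one_of_im_eq_zero hq) hne)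
  have hlift : ∀ g, ∃ z : ℂˣ, Φ z = ρ g := fun g => by
    obtain ⟨z, hz⟩ := hΦ (ρ g) (hcomm g).symm
    have hz0 : z ≠ 0 := by rintro rfl; simpa [← hz] using hρ.1 g
    exact ⟨Units.mk0 z hz0, hz⟩
  choose ζ hζ using hlift
  have hcoc : ∀ g h, cocycleOf ρ g h = Φ ↑(ζ (g * h) * (ζ h)⁻¹ * (ζ g)⁻¹) := fun g h => by
    simp [cocycleOf, ← hζ, map_inv₀]
  obtain ⟨β, hβ2, hβ⟩ := exists_sq_eq_one_of_sq_coboundary_eq_one h2 ζ fun g h => by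
    have hsq : cocycleOf ρ g h ^ 2 = 1 := by
      rcases hρ.2 g h with hc | hc <;> simp [cocycleOf, hc]
    rw [hcoc, ← map_pow, ← map_one Φ] at hsq
    exact Units.val_eq_one.mp (Φ.toRingHom.injective hsq)
  refine hcob ⟨fun g => Φ (β g), fun g => ?_, fun g h => ?_⟩
  · rcases sq_eq_one_iff.mp (congrArg Units.val (hβ2 g)) with h | h <;> simp [h]
  · rw [hcoc, hβ]
    simp [map_inv₀]

/-- If the abelianization of a finitely generated group `G` has no 2-torsion and the cocycle
of a projective representation `ρ : G → Sp(1)` is not a coboundary, then `ρ` is irreducible: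
the only unit quaternions commuting with the whole image of `ρ` are `±1`. -/
theorem irreducible_of_cocycle_not_coboundary {G : Type*} [Group G] (hfg : Group.FG G)
    (h2 : ∀ a : Abelianization G, a * a = 1 → a = 1)
    (ρ : G → ℍ[ℝ]) (hρ : IsProjRep ρ)
    (hcob : ¬ ∃ ε : G → ℍ[ℝ], (∀ g : G, ε g = 1 ∨ ε g = -1) ∧
      ∀ g h : G, cocycleOf ρ g h = ε g * ε h * (ε (g * h))⁻¹) :
    ∀ q : ℍ[ℝ], ‖q‖ = 1 → (∀ g : G, q * ρ g = ρ g * q) → q = 1 ∨ q = -1 :=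
  irreducible_of_cocycle_not_coboundary_general h2 ρ hρ hcob
end
end

section
/- Let V be a Klein four subgroup of SO(3). Then the centralizer of V in SO(3) is equal to V itself; in particular, any element of SO(3) that commutes with every element of a ℤ/2 ⊕ ℤ/2 subgroup of SO(3) belongs to that subgroup. -/
noncomputable section

/-- `SO3` is the group of 3×3 real orthogonal matrices of determinant one,
as a subgroup of the orthogonal group `O(3)`. -/
def SO3 : Subgroup ↥(Matrix.orthogonalGroup (Fin 3) ℝ) where
  carrier := {A | Matrix.det (A : Matrix (Fin 3) (Fin 3) ℝ) = 1}
  one_mem' := by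
    simp only [Set.mem_setOf_eq]
    norm_cast
    simp
  mul_mem' := by
    intro a b ha hb
    simp only [Set.mem_setOf_eq] at *
    push_cast
    rw [Matrix.det_mul, ha, hb, mul_one]
  inv_mem' := by
    intro a ha
    simp only [Set.mem_setOf_eq] at *
    have h : ((a⁻¹ * a : ↥(Matrix.orthogonalGroup (Fin 3) ℝ)) : Matrix (Fin 3) (Fin 3) ℝ)
        = ((1 : ↥(Matrix.orthogonalGroup (Fin 3) ℝ)) : Matrix (Fin 3) (Fin 3) ℝ) := by
      rw [inv_mul_cancel]
    push_cast at h
    have := congrArg Matrix.det h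
    rw [Matrix.det_mul, ha, mul_one, Matrix.det_one] at this
    exact this

/-!
A nontrivial involution of `SO(3)` is the half-turn about an axis `u`: its fixed vectors are
exactly the multiples of `u`, and it is determined by `u`. If `a ≠ b` are commuting nontrivial
involutions, `b` maps the axis of `a` to `±` itself, and the sign `+` would force `a = b`. Hence
the axes `u, v, w` of `a, b, ab` form an orthogonal frame on which `a, b, ab` act by the sign
patterns `(1,-1,-1), (-1,1,-1), (-1,-1,1)`. A rotation commuting with `a` and `b` preserves the
three axes, so it acts on the frame by signs with product `det = 1`: it is `1, a, b` or `ab`.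
-/

open Matrix

namespace Matrix

variable {ι : Type*} [Fintype ι]

theorem linearIndependent_of_pairwise_dotProduct_eq_zero {κ : Type*} {v : κ → ι → ℝ}
    (hv : ∀ i, v i ≠ 0) (h : Pairwise fun i j => v i ⬝ᵥ v j = 0) : LinearIndependent ℝ v := by
  rw [linearIndependent_iff']
  intro s g hg i hi
  have hdot := congrArg (· ⬝ᵥ v i) hg
  simp only [sum_dotProduct, smul_dotProduct, smul_eq_mul, zero_dotProduct] at hdot
  rw [Finset.sum_eq_single_of_mem i hi fun j _ hji => by rw [h hji, mul_zero]] at hdot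
  exact (mul_eq_zero.1 hdot).resolve_right fun h0 => hv i (dotProduct_self_eq_zero.1 h0)

theorem pairwise_dotProduct_vecCons_eq_zero {R : Type*} [CommSemiring R] {u v w : ι → R}
    (huv : u ⬝ᵥ v = 0) (huw : u ⬝ᵥ w = 0) (hvw : v ⬝ᵥ w = 0) :
    Pairwise fun i j => ![u, v, w] i ⬝ᵥ ![u, v, w] j = 0 := by
  intro i j hij
  fin_cases i <;> fin_cases j <;> simp_all [dotProduct_comm]

def IsAxis {K : Type*} [Field K] (A : Matrix ι ι K) (u : ι → K) : Prop :=
  u ≠ 0 ∧ ∀ x, A *ᵥ x = x ↔ x ∈ K ∙ u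

namespace IsAxis

variable {K : Type*} [Field K] {A B : Matrix ι ι K} {u v : ι → K}

theorem mulVec_self (h : IsAxis A u) : A *ᵥ u = u :=
  (h.2 u).2 (Submodule.mem_span_singleton_self u)

theorem of_mulVec_eq_self (h : IsAxis A v) (hu : u ≠ 0) (hAu : A *ᵥ u = u) : IsAxis A u := by
  obtain ⟨d, rfl⟩ := Submodule.mem_span_singleton.1 ((h.2 u).1 hAu)
  have hd : d ≠ 0 := by rintro rfl; simp at hu
  exact ⟨hu, fun x => by rw [h.2, Submodule.span_singleton_smul_eq (IsUnit.mk0 d hd)]⟩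

theorem exists_mulVec_eq_smul_of_commute (h : IsAxis A u) (hBA : Commute B A) :
    ∃ c : K, B *ᵥ u = c • u := by
  have hfix : A *ᵥ (B *ᵥ u) = B *ᵥ u := by
    rw [mulVec_mulVec, ← hBA.eq, ← mulVec_mulVec, h.mulVec_self]
  obtain ⟨c, hc⟩ := Submodule.mem_span_singleton.1 ((h.2 _).1 hfix)
  exact ⟨c, hc.symm⟩

end IsAxis

variable [DecidableEq ι]

theorem dotProduct_mulVec_mulVec_of_transpose_mul_self {R : Type*} [CommSemiring R]
    {A : Matrix ι ι R} (hA : Aᵀ * A = 1) (x y : ι → R) : A *ᵥ x ⬝ᵥ A *ᵥ y = x ⬝ᵥ y := by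
  rw [dotProduct_mulVec, ← vecMul_transpose, vecMul_vecMul, hA, vecMul_one]

theorem det_eq_prod_of_mulVec_basis {K : Type*} [CommRing K] {A : Matrix ι ι K}
    (b : Module.Basis ι K (ι → K)) {l : ι → K} (h : ∀ i, A *ᵥ b i = l i • b i) :
    A.det = ∏ i, l i := by
  have hdiag : LinearMap.toMatrix b b (toLin' A) = diagonal l := by
    ext i j
    rw [LinearMap.toMatrix_apply, toLin'_apply, h, map_smul, Module.Basis.repr_self,
      Finsupp.smul_apply, Finsupp.single_apply, diagonal_apply]
    split_ifs <;> simp_all [eq_comm]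
  rw [← LinearMap.det_toLin', ← LinearMap.det_toMatrix b, hdiag, det_diagonal]

theorem eq_of_mulVec_basis {K : Type*} [CommRing K] {A B : Matrix ι ι K}
    (b : Module.Basis ι K (ι → K)) (h : ∀ i, A *ᵥ b i = B *ᵥ b i) : A = B :=
  toLin'.injective (b.ext fun i => by simpa only [toLin'_apply] using h i)

theorem exists_mulVec_eq_neg_self_of_mul_self {R : Type*} [CommRing R] {A : Matrix ι ι R}
    (hA : A * A = 1) (hA1 : A ≠ 1) : ∃ z, z ≠ 0 ∧ A *ᵥ z = -z := by
  obtain ⟨m, hm⟩ : ∃ m, A *ᵥ m ≠ m := by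
    by_contra! h
    exact hA1 (ext_iff_mulVec.2 fun x => by rw [h, one_mulVec])
  refine ⟨A *ᵥ m - m, sub_ne_zero.2 hm, ?_⟩
  rw [mulVec_sub, mulVec_mulVec, hA, one_mulVec, neg_sub]

section Real

variable {A B : Matrix ι ι ℝ}

theorem eq_one_or_eq_neg_one_of_mulVec_eq_smul (hA : Aᵀ * A = 1) {x : ι → ℝ} (hx : x ≠ 0)
    {c : ℝ} (h : A *ᵥ x = c • x) : c = 1 ∨ c = -1 := by
  have hxx : x ⬝ᵥ x ≠ 0 := fun h0 => hx (dotProduct_self_eq_zero.1 h0)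
  have := dotProduct_mulVec_mulVec_of_transpose_mul_self hA x x
  rw [h, smul_dotProduct, dotProduct_smul, smul_eq_mul, smul_eq_mul, ← mul_assoc] at this
  exact mul_self_eq_one_iff.1 (mul_right_cancel₀ hxx (this.trans (one_mul _).symm))

theorem dotProduct_eq_zero_of_mulVec_eq_self_of_mulVec_eq_neg (hA : Aᵀ * A = 1)
    {x y : ι → ℝ} (hx : A *ᵥ x = x) (hy : A *ᵥ y = -y) : x ⬝ᵥ y = 0 := by
  have := dotProduct_mulVec_mulVec_of_transpose_mul_self hA x y
  rw [hx, hy, dotProduct_neg] at this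
  linarith

theorem det_eq_prod_of_mulVec_eq_smul_of_pairwise_dotProduct_eq_zero {v : ι → ι → ℝ}
    (hv : ∀ i, v i ≠ 0) (horth : Pairwise fun i j => v i ⬝ᵥ v j = 0) {l : ι → ℝ}
    (h : ∀ i, A *ᵥ v i = l i • v i) : A.det = ∏ i, l i :=
  det_eq_prod_of_mulVec_basis (basisOfLinearIndependentOfCardEqFinrank' v
    (linearIndependent_of_pairwise_dotProduct_eq_zero hv horth)
    (Module.finrank_fintype_fun_eq_card ℝ).symm) (by simpa using h)

theorem eq_of_mulVec_eq_of_pairwise_dotProduct_eq_zero {v : ι → ι → ℝ}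
    (hv : ∀ i, v i ≠ 0) (horth : Pairwise fun i j => v i ⬝ᵥ v j = 0)
    (h : ∀ i, A *ᵥ v i = B *ᵥ v i) : A = B :=
  eq_of_mulVec_basis (basisOfLinearIndependentOfCardEqFinrank' v
    (linearIndependent_of_pairwise_dotProduct_eq_zero hv horth)
    (Module.finrank_fintype_fun_eq_card ℝ).symm) (by simpa using h)

theorem exists_mulVec_eq_self_of_odd_card (hι : Odd (Fintype.card ι)) (hA : Aᵀ * A = 1)
    (hdet : A.det = 1) : ∃ u, u ≠ 0 ∧ A *ᵥ u = u := by
  have hskew : Aᵀ * (A - 1) = -(A - 1)ᵀ := by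
    rw [mul_sub, hA, mul_one, transpose_sub, transpose_one, neg_sub]
  have hdet' : (A - 1).det = 0 := by
    have := congrArg det hskew
    rw [det_mul, det_transpose, hdet, one_mul, det_neg, det_transpose, hι.neg_one_pow] at this
    linarith
  obtain ⟨u, hu, hAu⟩ := exists_mulVec_eq_zero_iff.2 hdet'
  exact ⟨u, hu, by rwa [sub_mulVec, one_mulVec, sub_eq_zero] at hAu⟩

theorem IsAxis.mulVec_eq (hA : Aᵀ * A = 1) (hA2 : A * A = 1) {u : ι → ℝ} (h : IsAxis A u)
    (x : ι → ℝ) : A *ᵥ x = (2 * (x ⬝ᵥ u) / (u ⬝ᵥ u)) • u - x := by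
  have huu : u ⬝ᵥ u ≠ 0 := fun h0 => h.1 (dotProduct_self_eq_zero.1 h0)
  have hfix : A *ᵥ (A *ᵥ x + x) = A *ᵥ x + x := by
    rw [mulVec_add, mulVec_mulVec, hA2, one_mulVec, add_comm]
  obtain ⟨c, hc⟩ := Submodule.mem_span_singleton.1 ((h.2 _).1 hfix)
  have hAxu : A *ᵥ x ⬝ᵥ u = x ⬝ᵥ u := by
    conv_lhs => rw [← h.mulVec_self]
    exact dotProduct_mulVec_mulVec_of_transpose_mul_self hA x u
  have hdot := congrArg (· ⬝ᵥ u) hc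
  simp only [smul_dotProduct, smul_eq_mul, add_dotProduct, hAxu] at hdot
  rw [show 2 * (x ⬝ᵥ u) / (u ⬝ᵥ u) = c by field_simp; linarith, hc]
  abel

theorem IsAxis.eq (hA : Aᵀ * A = 1) (hA2 : A * A = 1) (hB : Bᵀ * B = 1) (hB2 : B * B = 1)
    {u : ι → ℝ} (hAu : IsAxis A u) (hBu : IsAxis B u) : A = B :=
  ext_iff_mulVec.2 fun x => by rw [hAu.mulVec_eq hA hA2, hBu.mulVec_eq hB hB2]

end Real

theorem exists_isAxis_of_mul_self {A : Matrix (Fin 3) (Fin 3) ℝ} (hA : Aᵀ * A = 1)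
    (hdet : A.det = 1) (hA2 : A * A = 1) (hA1 : A ≠ 1) : ∃ u, IsAxis A u := by
  obtain ⟨u, hu, hAu⟩ := exists_mulVec_eq_self_of_odd_card (by simp; decide) hA hdet
  obtain ⟨z, hz, hAz⟩ := exists_mulVec_eq_neg_self_of_mul_self hA2 hA1
  refine ⟨u, hu, fun x => ⟨fun hx => ?_, fun hx => ?_⟩⟩
  · -- otherwise the component `y` of `x` orthogonal to `u` completes `u, z` to an orthogonal
    -- eigenbasis with eigenvalues `1, 1, -1`, and `det A = -1`
    by_contra hxu
    set y := x - (x ⬝ᵥ u / (u ⬝ᵥ u)) • u with hy_def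
    have hy : y ≠ 0 := fun h0 =>
      hxu (Submodule.mem_span_singleton.2 ⟨_, (sub_eq_zero.1 h0).symm⟩)
    have hAy : A *ᵥ y = y := by rw [mulVec_sub, mulVec_smul, hx, hAu]
    have huu : u ⬝ᵥ u ≠ 0 := fun h0 => hu (dotProduct_self_eq_zero.1 h0)
    have huy : u ⬝ᵥ y = 0 := by
      rw [hy_def, dotProduct_sub, dotProduct_smul, smul_eq_mul, dotProduct_comm u x]
      field_simp
      ring
    have hdet' := det_eq_prod_of_mulVec_eq_smul_of_pairwise_dotProduct_eq_zero
      (A := A) (v := ![u, y, z]) (l := ![1, 1, -1]) (by simp [Fin.forall_fin_succ, hu, hy, hz])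
      (pairwise_dotProduct_vecCons_eq_zero huy
        (dotProduct_eq_zero_of_mulVec_eq_self_of_mulVec_eq_neg hA hAu hAz)
        (dotProduct_eq_zero_of_mulVec_eq_self_of_mulVec_eq_neg hA hAy hAz))
      (by simp [Fin.forall_fin_succ, hAu, hAy, hAz])
    norm_num [hdet, Fin.prod_univ_three, cons_val_two, tail_cons, head_cons] at hdet'
  · obtain ⟨c, rfl⟩ := Submodule.mem_span_singleton.1 hx
    rw [mulVec_smul, hAu]

end Matrix

namespace SO3

local notation "M₃" => Matrix (Fin 3) (Fin 3) ℝ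

theorem coe_mul (a b : SO3) : ((a * b : SO3) : M₃) = a * b := rfl

theorem coe_one : ((1 : SO3) : M₃) = 1 := rfl

theorem coe_injective : Function.Injective fun g : SO3 => (g : M₃) :=
  Subtype.val_injective.comp Subtype.val_injective

theorem transpose_mul_self (g : SO3) : (g : M₃)ᵀ * g = 1 :=
  (mem_orthogonalGroup_iff' _ _).1 g.1.2

theorem det_coe (g : SO3) : (g : M₃).det = 1 := g.2

theorem coe_mul_self {a : SO3} (ha : a * a = 1) : (a : M₃) * a = 1 := by
  rw [← coe_mul, ha, coe_one]

theorem commute_coe {a b : SO3} (h : Commute a b) : Commute (a : M₃) b := by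
  simpa only [Commute, SemiconjBy, ← coe_mul] using congrArg (fun g : SO3 => (g : M₃)) h.eq

theorem exists_isAxis {a : SO3} (ha : a * a = 1) (ha1 : a ≠ 1) : ∃ u, IsAxis (a : M₃) u :=
  exists_isAxis_of_mul_self (transpose_mul_self a) (det_coe a) (coe_mul_self ha)
    fun h => ha1 (coe_injective (h.trans coe_one.symm))

theorem mulVec_eq_neg_of_isAxis {a b : SO3} (ha : a * a = 1) (hb : b * b = 1) (hb1 : b ≠ 1)
    (hab : a ≠ b) (hcomm : Commute a b) {u : Fin 3 → ℝ} (hu : IsAxis (a : M₃) u) :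
    (b : M₃) *ᵥ u = -u := by
  obtain ⟨c, hc⟩ := hu.exists_mulVec_eq_smul_of_commute (commute_coe hcomm.symm)
  rcases eq_one_or_eq_neg_one_of_mulVec_eq_smul (transpose_mul_self b) hu.1 hc with rfl | rfl
  · obtain ⟨v, hv⟩ := exists_isAxis hb hb1
    exact absurd (coe_injective (hu.eq (transpose_mul_self a) (coe_mul_self ha)
      (transpose_mul_self b) (coe_mul_self hb)
      (hv.of_mulVec_eq_self hu.1 (by rwa [one_smul] at hc)))) hab
  · rwa [neg_one_smul] at hc

theorem eq_one_or_eq_or_eq_or_eq_mul_of_isAxis {a b g : SO3} {u v w : Fin 3 → ℝ}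
    (hu : IsAxis (a : M₃) u) (hv : IsAxis (b : M₃) v) (hw : IsAxis ((a * b : SO3) : M₃) w)
    (hbu : (b : M₃) *ᵥ u = -u) (hav : (a : M₃) *ᵥ v = -v) (haw : (a : M₃) *ᵥ w = -w)
    (hbw : (b : M₃) *ᵥ w = -w) (hga : Commute g a) (hgb : Commute g b) :
    g = 1 ∨ g = a ∨ g = b ∨ g = a * b := by
  have hcu : ((a * b : SO3) : M₃) *ᵥ u = -u := by
    rw [coe_mul, ← mulVec_mulVec, hbu, mulVec_neg, hu.mulVec_self]
  have hcv : ((a * b : SO3) : M₃) *ᵥ v = -v := by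
    rw [coe_mul, ← mulVec_mulVec, hv.mulVec_self, hav]
  have hframe : Pairwise fun i j => ![u, v, w] i ⬝ᵥ ![u, v, w] j = 0 :=
    pairwise_dotProduct_vecCons_eq_zero
      (dotProduct_eq_zero_of_mulVec_eq_self_of_mulVec_eq_neg (transpose_mul_self a)
        hu.mulVec_self hav)
      (dotProduct_eq_zero_of_mulVec_eq_self_of_mulVec_eq_neg (transpose_mul_self a)
        hu.mulVec_self haw)
      (dotProduct_eq_zero_of_mulVec_eq_self_of_mulVec_eq_neg (transpose_mul_self b)
        hv.mulVec_self hbw)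
  have hframe0 : ∀ i, ![u, v, w] i ≠ 0 := by simp [Fin.forall_fin_succ, hu.1, hv.1, hw.1]
  have heq : ∀ m : SO3, (m : M₃) *ᵥ u = (g : M₃) *ᵥ u → (m : M₃) *ᵥ v = (g : M₃) *ᵥ v →
      (m : M₃) *ᵥ w = (g : M₃) *ᵥ w → g = m := fun m h1 h2 h3 =>
    coe_injective (eq_of_mulVec_eq_of_pairwise_dotProduct_eq_zero hframe0 hframe
      (by simp [Fin.forall_fin_succ, h1, h2, h3])).symm
  obtain ⟨α, hgu⟩ := hu.exists_mulVec_eq_smul_of_commute (commute_coe hga)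
  obtain ⟨β, hgv⟩ := hv.exists_mulVec_eq_smul_of_commute (commute_coe hgb)
  obtain ⟨γ, hgw⟩ := hw.exists_mulVec_eq_smul_of_commute (commute_coe (hga.mul_right hgb))
  have hdet : α * β * γ = 1 := by
    rw [← det_coe g, det_eq_prod_of_mulVec_eq_smul_of_pairwise_dotProduct_eq_zero hframe0 hframe
      (l := ![α, β, γ]) (by simp [Fin.forall_fin_succ, hgu, hgv, hgw]), Fin.prod_univ_three]
    rfl
  rcases eq_one_or_eq_neg_one_of_mulVec_eq_smul (transpose_mul_self g) hu.1 hgu with rfl | rfl <;>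
    rcases eq_one_or_eq_neg_one_of_mulVec_eq_smul (transpose_mul_self g) hv.1 hgv with rfl | rfl <;>
    rcases eq_one_or_eq_neg_one_of_mulVec_eq_smul (transpose_mul_self g) hw.1 hgw with rfl | rfl <;>
    norm_num at hdet
  · exact Or.inl (heq 1 (by simp [hgu]) (by simp [hgv]) (by simp [hgw]))
  · exact Or.inr <| Or.inl <|
      heq a (by simp [hu.mulVec_self, hgu]) (by simp [hav, hgv]) (by simp [haw, hgw])
  · exact Or.inr <| Or.inr <| Or.inl <|
      heq b (by simp [hbu, hgu]) (by simp [hv.mulVec_self, hgv]) (by simp [hbw, hgw])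
  · exact Or.inr <| Or.inr <| Or.inr <|
      heq (a * b) (by rw [hcu, hgu, neg_one_smul]) (by rw [hcv, hgv, neg_one_smul])
        (by rw [hw.mulVec_self, hgw, one_smul])

theorem eq_one_or_eq_or_eq_or_eq_mul_of_commute {a b g : SO3} (ha : a * a = 1) (hb : b * b = 1)
    (ha1 : a ≠ 1) (hb1 : b ≠ 1) (hab : a ≠ b) (hcomm : Commute a b) (hga : Commute g a)
    (hgb : Commute g b) : g = 1 ∨ g = a ∨ g = b ∨ g = a * b := by
  have hc : a * b * (a * b) = 1 := by rw [← sq, hcomm.mul_pow, sq, sq, ha, hb, one_mul]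
  have hc1 : a * b ≠ 1 := fun h =>
    hab (by rw [eq_inv_of_mul_eq_one_right h, inv_eq_of_mul_eq_one_right ha])
  have hac : a ≠ a * b := by simpa using hb1
  have hbc : b ≠ a * b := by simpa using ha1
  have hac' : Commute a (a * b) := (Commute.refl a).mul_right hcomm
  have hbc' : Commute b (a * b) := hcomm.symm.mul_right (Commute.refl b)
  obtain ⟨u, hu⟩ := exists_isAxis ha ha1
  obtain ⟨v, hv⟩ := exists_isAxis hb hb1
  obtain ⟨w, hw⟩ := exists_isAxis hc hc1
  exact eq_one_or_eq_or_eq_or_eq_mul_of_isAxis hu hv hw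
    (mulVec_eq_neg_of_isAxis ha hb hb1 hab hcomm hu)
    (mulVec_eq_neg_of_isAxis hb ha ha1 hab.symm hcomm.symm hv)
    (mulVec_eq_neg_of_isAxis hc ha ha1 hac.symm hac'.symm hw)
    (mulVec_eq_neg_of_isAxis hc hb hb1 hbc.symm hbc'.symm hw) hga hgb

end SO3

theorem IsKleinFour.exists_ne_one_ne_one_ne {G : Type*} [Group G] [IsKleinFour G] :
    ∃ a b : G, a ≠ 1 ∧ b ≠ 1 ∧ a ≠ b := by
  classical
  have : Finite G := IsKleinFour.instFinite
  let _ := Fintype.ofFinite G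
  obtain ⟨a, -, ha⟩ := Finset.exists_mem_notMem_of_card_lt_card
    (s := {(1 : G)}) (t := Finset.univ) (by simp)
  obtain ⟨b, -, hb⟩ := Finset.exists_mem_notMem_of_card_lt_card
    (s := {(1 : G), a}) (t := Finset.univ) (Finset.card_le_two.trans_lt (by simp))
  simp only [Finset.mem_singleton, Finset.mem_insert, not_or] at ha hb
  exact ⟨a, b, ha, hb.1, Ne.symm hb.2⟩

/-- The centralizer of a Klein four subgroup of `SO(3)` is the subgroup itself; in particular
every element of `SO(3)` commuting with all elements of such a subgroup belongs to it. -/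
theorem klein_four_centralizer (V : Subgroup ↥SO3) (hV : IsKleinFour ↥V) :
    Subgroup.centralizer (V : Set ↥SO3) = V ∧
    ∀ g : ↥SO3, (∀ v ∈ V, g * v = v * g) → g ∈ V := by
  have hcomm : V ≤ Subgroup.centralizer V :=
    Subgroup.le_centralizer_iff_isMulCommutative.2 IsKleinFour.isMulCommutative
  have hmul_self (x : V) : (x : SO3) * x = 1 := congrArg Subtype.val (IsKleinFour.mul_self x)
  obtain ⟨a, b, ha1, hb1, hab⟩ := IsKleinFour.exists_ne_one_ne_one_ne (G := V)
  have mem (g : SO3) (hg : ∀ v ∈ V, g * v = v * g) : g ∈ V := by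
    rcases SO3.eq_one_or_eq_or_eq_or_eq_mul_of_commute (hmul_self a) (hmul_self b)
      (by simpa using ha1) (by simpa using hb1) (Subtype.val_injective.ne hab)
      (Subgroup.mem_centralizer_iff.1 (hcomm b.2) a a.2) (hg a a.2) (hg b b.2)
      with rfl | rfl | rfl | rfl
    exacts [one_mem V, a.2, b.2, mul_mem a.2 b.2]
  refine ⟨le_antisymm (fun g hg => mem g fun v hv => ?_) hcomm, mem⟩
  exact (Subgroup.mem_centralizer_iff.1 hg v hv).symm
end
end

section
/- Let G be a group and ρ: G → Sp(1) an irreducible projective representation. Suppose α, β: G → {±1} are group homomorphisms with α ≠ 1, β ≠ 1, α ≠ β, such that each of the twisted representations ρ^α and ρ^β is conjugate to ρ (i.e., there exist u, v ∈ Sp(1) with α(g)ρ(g) = u ρ(g) u⁻¹ and β(g)ρ(g) = v ρ(g) v⁻¹ for all g ∈ G). Then there exists w ∈ Sp(1) such that w ρ(g) w⁻¹ ∈ Q8 = {±1, ±i, ±j, ±k} for every g ∈ G; in particular ρ factors, up to conjugacy, through the quaternion group of order 8. -/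
noncomputable section

open Quaternion

/-- A homomorphism from `G` into the subgroup `{±1}` of unit quaternions. -/
def IsSignHom {G : Type*} [Group G] (χ : G → ℍ[ℝ]) : Prop :=
  (∀ g : G, χ g = 1 ∨ χ g = -1) ∧ ∀ g h : G, χ (g * h) = χ g * χ h

/-- A projective representation `ρ` is irreducible if the centralizer of its image in `Sp(1)`
is `{±1}`. -/
def IsIrred {G : Type*} [Group G] (ρ : G → ℍ[ℝ]) : Prop :=
  ∀ q : ℍ[ℝ], ‖q‖ = 1 → (∀ g : G, q * ρ g = ρ g * q) → q = 1 ∨ q = -1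

def qi : ℍ[ℝ] := ⟨0, 1, 0, 0⟩
def qj : ℍ[ℝ] := ⟨0, 0, 1, 0⟩
def qk : ℍ[ℝ] := ⟨0, 0, 0, 1⟩

/-- The quaternion group `Q8 = {±1, ±i, ±j, ±k}` inside the unit quaternions. -/
def Q8 : Set ℍ[ℝ] := {1, -1, qi, -qi, qj, -qj, qk, -qk}

/-!
Every `ρ g` commutes or anticommutes with `u`, according to the sign `α g`, and likewise with `v`
and with `u * v` (sign `α g * β g`). Hence `u ^ 2`, `v ^ 2` and `(u * v) ^ 2` commute with the
image of `ρ` and are `±1` by irreducibility; `+1` would make the corresponding character trivial,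
so `u ^ 2 = v ^ 2 = (u * v) ^ 2 = -1`: `u` and `v` are anticommuting imaginary units. Conjugating
`(u, v)` to `(i, j)`, each conjugated `ρ g` commutes or anticommutes with `i` and with `j`, which
leaves a single nonzero coordinate, so it lies in `±{1, i, j, k}`.
-/

section Ring

variable {R : Type*} [Ring R]

theorem commute_of_eq_one_or_eq_neg_one {c : R} (hc : c = 1 ∨ c = -1) (x : R) : Commute c x := by
  rcases hc with rfl | rfl
  exacts [Commute.one_left x, Commute.neg_one_left x]

theorem mul_eq_one_or_eq_neg_one {c d : R} (hc : c = 1 ∨ c = -1) (hd : d = 1 ∨ d = -1) :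
    c * d = 1 ∨ c * d = -1 := by
  rcases hc with rfl | rfl <;> rcases hd with rfl | rfl <;> simp

theorem mul_ne_one_of_ne {c d : R} (hc : c = 1 ∨ c = -1) (hcd : c ≠ d) : d * c ≠ 1 := by
  have hcc : c * c = 1 := by rcases hc with rfl | rfl <;> simp
  intro h
  apply hcd
  rw [← one_mul c, ← h, mul_assoc, hcc, mul_one]

theorem commute_mul_self_of_twist {c y u : R} (hc : c = 1 ∨ c = -1) (h : c * y * u = u * y) :
    Commute (u * u) y := by
  rcases hc with rfl | rfl
  · have hu : Commute u y := by rw [one_mul] at h; exact h.symm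
    exact hu.mul_left hu
  · rw [neg_one_mul, neg_mul] at h
    calc u * u * y = u * -(y * u) := by rw [mul_assoc, h]
      _ = -(u * y) * u := by noncomm_ring
      _ = y * (u * u) := by rw [← h]; noncomm_ring

theorem twist_mul {c d y u v : R} (hd : Commute d u) (hu : c * y * u = u * y)
    (hv : d * y * v = v * y) : d * c * y * (u * v) = u * v * y :=
  calc d * c * y * (u * v) = d * (c * y * u) * v := by simp only [mul_assoc]
    _ = d * u * y * v := by rw [hu]; simp only [mul_assoc]
    _ = u * (d * y * v) := by rw [hd.eq]; simp only [mul_assoc]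
    _ = u * v * y := by rw [hv, mul_assoc]

theorem mul_comm_eq_neg_of_mul_self_eq_neg_one {u v : R} (hu : u * u = -1) (hv : v * v = -1)
    (huv : u * v * (u * v) = -1) : v * u = -(u * v) :=
  calc v * u = -(u * u) * (v * u) * -(v * v) := by rw [hu, hv]; simp
    _ = u * (u * v * (u * v)) * v := by noncomm_ring
    _ = -(u * v) := by rw [huv]; noncomm_ring

/-- Writing `φ` for `1, i, j, i * j ↦ 1, u, v, u * v`, this is the average `∑ x⁻¹ * e * φ x`,
which intertwines `(u, v)` with `(i, j)`. -/
def intertwiner (i j u v e : R) : R := e - i * e * u - j * e * v - i * j * e * (u * v)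

theorem intertwiner_mul_fst {i j u v : R} (hi : i * i = -1) (hu : u * u = -1)
    (hvu : v * u = -(u * v)) (e : R) :
    intertwiner i j u v e * u = i * intertwiner i j u v e := by
  have hi' : i * i + 1 = 0 := by rw [hi, neg_add_cancel]
  have hu' : u * u + 1 = 0 := by rw [hu, neg_add_cancel]
  have hvu' : v * u + u * v = 0 := by rw [hvu, neg_add_cancel]
  rw [← sub_eq_zero]
  calc intertwiner i j u v e * u - i * intertwiner i j u v e
      = -(i * e * (u * u + 1)) + (i * i + 1) * e * u - j * e * (v * u + u * v)
          + (i * i + 1) * j * e * (u * v) - i * j * e * u * (v * u + u * v)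
          + i * j * e * (u * u + 1) * v := by
        unfold intertwiner; noncomm_ring
    _ = 0 := by rw [hi', hu', hvu']; simp

theorem intertwiner_swap {i j u v : R} (hji : j * i = -(i * j)) (hvu : v * u = -(u * v))
    (e : R) : intertwiner j i v u e = intertwiner i j u v e := by
  unfold intertwiner
  rw [hji, hvu]
  noncomm_ring

theorem intertwiner_mul_snd {i j u v : R} (hj : j * j = -1) (hv : v * v = -1)
    (hji : j * i = -(i * j)) (hvu : v * u = -(u * v)) (e : R) :
    intertwiner i j u v e * v = j * intertwiner i j u v e := by
  have huv : u * v = -(v * u) := by rw [hvu, neg_neg]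
  rw [← intertwiner_swap hji hvu]
  exact intertwiner_mul_fst hj hv huv e

end Ring

theorem twist_conj {K : Type*} [DivisionRing K] {c y u w x : K} (hw : w ≠ 0) (hc : Commute c w)
    (hwu : w * u = x * w) (h : c * y * u = u * y) :
    c * (w * y * w⁻¹) * x = x * (w * y * w⁻¹) := by
  rw [(eq_mul_inv_iff_mul_eq₀ hw).mpr hwu.symm]
  calc c * (w * y * w⁻¹) * (w * u * w⁻¹) = c * w * (y * u) * w⁻¹ := by
        simp only [mul_assoc, inv_mul_cancel_left₀ hw]
    _ = w * (c * y * u) * w⁻¹ := by rw [hc.eq]; simp only [mul_assoc]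
    _ = w * (u * y) * w⁻¹ := by rw [h]
    _ = w * u * w⁻¹ * (w * y * w⁻¹) := by simp only [mul_assoc, inv_mul_cancel_left₀ hw]

theorem qi_mul_qi : qi * qi = -1 := by
  ext <;> simp only [re_mul, imI_mul, imJ_mul, imK_mul, re_neg, imI_neg, imJ_neg, imK_neg] <;>
    norm_num [qi]

theorem qj_mul_qj : qj * qj = -1 := by
  ext <;> simp only [re_mul, imI_mul, imJ_mul, imK_mul, re_neg, imI_neg, imJ_neg, imK_neg] <;>
    norm_num [qj]

theorem qj_mul_qi : qj * qi = -(qi * qj) := by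
  ext <;> simp only [re_mul, imI_mul, imJ_mul, imK_mul, re_neg, imI_neg, imJ_neg, imK_neg] <;>
    norm_num [qi, qj]

/-- The left side is the trace of the `ℝ`-linear map `intertwiner qi qj u v`, whose three terms
`e ↦ x * e * y` with `x` purely imaginary are traceless. -/
theorem intertwiner_trace (u v : ℍ[ℝ]) :
    (intertwiner qi qj u v 1).re + (intertwiner qi qj u v qi).imI
      + (intertwiner qi qj u v qj).imJ + (intertwiner qi qj u v qk).imK = 4 := by
  simp only [intertwiner, re_mul, imI_mul, imJ_mul, imK_mul, re_sub, imI_sub, imJ_sub, imK_sub,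
    re_one, imI_one, imJ_one, imK_one]
  simp only [qi, qj, qk]
  ring

theorem exists_conj_eq_qi_qj {u v : ℍ[ℝ]} (hu : u * u = -1) (hv : v * v = -1)
    (hvu : v * u = -(u * v)) : ∃ w : ℍ[ℝ], ‖w‖ = 1 ∧ w * u = qi * w ∧ w * v = qj * w := by
  obtain ⟨e, he⟩ : ∃ e, intertwiner qi qj u v e ≠ 0 := by
    by_contra! h
    have := intertwiner_trace u v
    rw [h, h, h, h] at this
    norm_num at this
  have ht : ‖intertwiner qi qj u v e‖ ≠ 0 := norm_ne_zero_iff.mpr he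
  refine ⟨‖intertwiner qi qj u v e‖⁻¹ • intertwiner qi qj u v e, ?_, ?_, ?_⟩
  · rw [norm_smul, norm_inv, norm_norm, inv_mul_cancel₀ ht]
  · rw [smul_mul_assoc, intertwiner_mul_fst qi_mul_qi hu hvu, mul_smul_comm]
  · rw [smul_mul_assoc, intertwiner_mul_snd qj_mul_qj hv qj_mul_qi hvu, mul_smul_comm]

theorem mem_Q8_of_twist {a b x : ℍ[ℝ]} (hx : ‖x‖ = 1) (ha : a = 1 ∨ a = -1)
    (hb : b = 1 ∨ b = -1) (hi : a * x * qi = qi * x) (hj : b * x * qj = qj * x) : x ∈ Q8 := by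
  have hn : x.re ^ 2 + x.imI ^ 2 + x.imJ ^ 2 + x.imK ^ 2 = 1 := by
    rw [← normSq_def', normSq_eq_norm_mul_self, hx, one_mul]
  have hi' := Quaternion.ext_iff.mp hi
  have hj' := Quaternion.ext_iff.mp hj
  simp only [re_mul, imI_mul, imJ_mul, imK_mul] at hi' hj'
  -- Conjugation by `i` negates `imJ, imK` and conjugation by `j` negates `imI, imK`, so in each
  -- case three coordinates vanish.
  rcases ha with rfl | rfl <;> rcases hb with rfl | rfl <;>
    simp only [qi, qj, re_neg, imI_neg, imJ_neg, imK_neg, re_one, imI_one, imJ_one, imK_one,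
      neg_mul, one_mul, mul_one, zero_mul, mul_zero, neg_zero, add_zero, zero_add, sub_zero,
      zero_sub, sub_self, sub_neg_eq_add, self_eq_neg, neg_eq_self, true_and, and_true,
      and_self] at hi' hj' <;>
    simp only [hi', hj', ne_eq, OfNat.ofNat_ne_zero, not_false_eq_true, zero_pow, add_zero,
      zero_add, sq_eq_one_iff] at hn <;>
    rcases hn with h | h <;>
    simp only [Q8, Set.mem_insert_iff, Set.mem_singleton_iff, Quaternion.ext_iff, re_neg, imI_neg,
      imJ_neg, imK_neg, re_one, imI_one, imJ_one, imK_one] <;>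
    norm_num [qi, qj, qk, h, hi', hj']

theorem mul_self_eq_neg_one_of_twist {G : Type*} [Group G] {ρ χ : G → ℍ[ℝ]} (hirr : IsIrred ρ)
    (hρ : ∀ g, ρ g ≠ 0) (hχ : ∀ g, χ g = 1 ∨ χ g = -1) (hχ1 : ∃ g, χ g ≠ 1) {u : ℍ[ℝ]}
    (hu : ‖u‖ = 1) (h : ∀ g, χ g * ρ g * u = u * ρ g) : u * u = -1 := by
  have hcomm : ∀ g, u * u * ρ g = ρ g * (u * u) := fun g =>
    (commute_mul_self_of_twist (hχ g) (h g)).eq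
  refine (hirr (u * u) (by rw [norm_mul, hu, one_mul]) hcomm).resolve_left fun huu => ?_
  obtain ⟨g, hg⟩ := hχ1
  have hu0 : u ≠ 0 := ne_zero_of_norm_ne_zero (by simp [hu])
  have hcentral : Commute u (ρ g) :=
    (commute_of_eq_one_or_eq_neg_one (mul_self_eq_one_iff.mp huu)) (ρ g)
  refine hg (mul_right_cancel₀ (hρ g) (mul_right_cancel₀ hu0 ?_))
  rw [h g, hcentral.eq, one_mul]

/-- If an irreducible projective representation `ρ` is conjugate to its twists by two distinct
nontrivial sign homomorphisms, then it factors, up to conjugation, through the quaternion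
group `Q8`. -/
theorem factors_through_Q8 {G : Type*} [Group G] (ρ : G → ℍ[ℝ]) (hρ : IsProjRep ρ)
    (hirr : IsIrred ρ)
    (α β : G → ℍ[ℝ]) (hα : IsSignHom α) (hβ : IsSignHom β)
    (hα1 : ∃ g : G, α g ≠ 1) (hβ1 : ∃ g : G, β g ≠ 1) (hαβ : α ≠ β)
    (u v : ℍ[ℝ]) (hu : ‖u‖ = 1) (hv : ‖v‖ = 1)
    (huα : ∀ g : G, α g * ρ g = u * ρ g * u⁻¹)
    (hvβ : ∀ g : G, β g * ρ g = v * ρ g * v⁻¹) :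
    ∃ w : ℍ[ℝ], ‖w‖ = 1 ∧ ∀ g : G, w * ρ g * w⁻¹ ∈ Q8 := by
  have hρ0 : ∀ g, ρ g ≠ 0 := fun g => ne_zero_of_norm_ne_zero (by simp [hρ.1 g])
  have hu0 : u ≠ 0 := ne_zero_of_norm_ne_zero (by simp [hu])
  have hv0 : v ≠ 0 := ne_zero_of_norm_ne_zero (by simp [hv])
  have huρ : ∀ g, α g * ρ g * u = u * ρ g := fun g => (eq_mul_inv_iff_mul_eq₀ hu0).mp (huα g)
  have hvρ : ∀ g, β g * ρ g * v = v * ρ g := fun g => (eq_mul_inv_iff_mul_eq₀ hv0).mp (hvβ g)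
  have huvρ : ∀ g, β g * α g * ρ g * (u * v) = u * v * ρ g := fun g =>
    twist_mul (commute_of_eq_one_or_eq_neg_one (hβ.1 g) u) (huρ g) (hvρ g)
  have huu := mul_self_eq_neg_one_of_twist hirr hρ0 hα.1 hα1 hu huρ
  have hvv := mul_self_eq_neg_one_of_twist hirr hρ0 hβ.1 hβ1 hv hvρ
  obtain ⟨g₀, hg₀⟩ := Function.ne_iff.mp hαβ
  have huvuv := mul_self_eq_neg_one_of_twist hirr hρ0
    (fun g => mul_eq_one_or_eq_neg_one (hβ.1 g) (hα.1 g)) ⟨g₀, mul_ne_one_of_ne (hα.1 g₀) hg₀⟩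
    (by rw [norm_mul, hu, hv, one_mul]) huvρ
  obtain ⟨w, hw, hwu, hwv⟩ :=
    exists_conj_eq_qi_qj huu hvv (mul_comm_eq_neg_of_mul_self_eq_neg_one huu hvv huvuv)
  have hw0 : w ≠ 0 := ne_zero_of_norm_ne_zero (by simp [hw])
  exact ⟨w, hw, fun g => mem_Q8_of_twist (by simp [hw, hρ.1 g]) (hα.1 g) (hβ.1 g)
    (twist_conj hw0 (commute_of_eq_one_or_eq_neg_one (hα.1 g) w) hwu (huρ g))
    (twist_conj hw0 (commute_of_eq_one_or_eq_neg_one (hβ.1 g) w) hwv (hvρ g))⟩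
end
end

section
/- Let G be a group and ρ: G → Sp(1) an irreducible projective representation. Then the set of group homomorphisms χ: G → {±1} such that the twisted representation ρ^χ is conjugate to ρ in Sp(1) is a subgroup of Hom(G, {±1}) with at most 4 elements. -/
noncomputable section

open Quaternion

/-!
If a unit quaternion `u` conjugates `ρ` into `ρ^χ`, then `u²` conjugates `ρ` into `ρ^{χ²} = ρ`, so
`u² = ±1` by irreducibility. For `χ ≠ 1` the case `u² = 1` is impossible (then `u = ±1` is central),
so `u² = -1`, i.e. `u` is purely imaginary. If `u` and `v` realize distinct `χ` and `ψ`, then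
`u v⁻¹ = u v̄` realizes `χψ ≠ 1`, hence `⟪u, v⟫ = Re (u v̄) = 0`. One realizer for each element of
the stabilizer thus gives an orthonormal family in `ℍ ≅ ℝ⁴`, which has at most four members.
-/

namespace Quaternion

theorem inv_eq_star_of_norm_eq_one {u : ℍ[ℝ]} (hu : ‖u‖ = 1) : u⁻¹ = star u := by
  rw [inv_def, normSq_eq_norm_mul_self, hu, mul_one, inv_one, one_smul]

theorem re_eq_zero_of_mul_self_eq_neg_one {u : ℍ[ℝ]} (hu : ‖u‖ = 1) (h : u * u = -1) :
    u.re = 0 := by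
  rw [← sq_eq_neg_normSq, sq, h, normSq_eq_norm_mul_self, hu, mul_one, coe_one]

end Quaternion

section

variable {G : Type*}

namespace IsSignHom

variable [Group G] {χ ψ : G → ℍ[ℝ]}

theorem commute (hχ : IsSignHom χ) (g : G) (q : ℍ[ℝ]) : Commute (χ g) q := by
  rcases hχ.1 g with h | h <;> rw [h]
  exacts [Commute.one_left q, Commute.neg_one_left q]

theorem mul_self_apply (hχ : IsSignHom χ) (g : G) : χ g * χ g = 1 := by
  rcases hχ.1 g with h | h <;> simp [h]

theorem inv_apply (hχ : IsSignHom χ) (g : G) : (χ g)⁻¹ = χ g :=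
  inv_eq_of_mul_eq_one_right (hχ.mul_self_apply g)

theorem one : IsSignHom (fun _ : G => (1 : ℍ[ℝ])) :=
  ⟨fun _ => Or.inl rfl, fun _ _ => (one_mul 1).symm⟩

theorem mul (hχ : IsSignHom χ) (hψ : IsSignHom ψ) : IsSignHom (fun g => χ g * ψ g) := by
  refine ⟨fun g => ?_, fun g h => ?_⟩
  · rcases hχ.1 g with a | a <;> rcases hψ.1 g with b | b <;> simp [a, b]
  · show χ (g * h) * ψ (g * h) = χ g * ψ g * (χ h * ψ h)
    rw [hχ.2, hψ.2, mul_assoc, mul_assoc, ← mul_assoc (χ h), (hχ.commute h (ψ g)).eq, mul_assoc]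

theorem eq_of_mul_eq_one (hψ : IsSignHom ψ) (h : (fun g => χ g * ψ g) = fun _ => 1) :
    χ = ψ :=
  funext fun g => by rw [eq_inv_of_mul_eq_one_left (congrFun h g), hψ.inv_apply]

end IsSignHom

def IsTwistingUnit (ρ χ : G → ℍ[ℝ]) (u : ℍ[ℝ]) : Prop :=
  ‖u‖ = 1 ∧ ∀ g : G, χ g * ρ g = u * ρ g * u⁻¹

def twistStabilizer [Group G] (ρ : G → ℍ[ℝ]) : Set (G → ℍ[ℝ]) :=
  {χ | IsSignHom χ ∧ ∃ u, IsTwistingUnit ρ χ u}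

namespace IsTwistingUnit

variable {ρ χ ψ : G → ℍ[ℝ]} {u v : ℍ[ℝ]}

theorem one_left (ρ : G → ℍ[ℝ]) : IsTwistingUnit ρ (fun _ => 1) 1 :=
  ⟨norm_one, fun g => by rw [one_mul, inv_one, mul_one]⟩

theorem ne_zero (hu : IsTwistingUnit ρ χ u) : u ≠ 0 :=
  norm_ne_zero_iff.mp (hu.1 ▸ one_ne_zero)

variable [Group G]

theorem mul (hu : IsTwistingUnit ρ χ u) (hv : IsTwistingUnit ρ ψ v) (hψ : IsSignHom ψ) :
    IsTwistingUnit ρ (fun g => χ g * ψ g) (u * v) := by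
  refine ⟨by rw [norm_mul, hu.1, hv.1, one_mul], fun g => ?_⟩
  calc χ g * ψ g * ρ g = ψ g * (χ g * ρ g) := by
        rw [← mul_assoc, (hψ.commute g (χ g)).eq]
    _ = u * (ψ g * ρ g) * u⁻¹ := by
        rw [hu.2, ← mul_assoc, ← mul_assoc, (hψ.commute g u).eq]; simp only [mul_assoc]
    _ = u * v * ρ g * (u * v)⁻¹ := by
        rw [hv.2, mul_inv_rev]; noncomm_ring

theorem inv (hu : IsTwistingUnit ρ χ u) (hχ : IsSignHom χ) : IsTwistingUnit ρ χ u⁻¹ := by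
  have hu0 := hu.ne_zero
  refine ⟨by rw [norm_inv, hu.1, inv_one], fun g => ?_⟩
  calc χ g * ρ g = χ g * (u⁻¹ * (u * ρ g * u⁻¹) * u) := by
        simp only [mul_assoc, inv_mul_cancel₀ hu0, inv_mul_cancel_left₀ hu0, mul_one]
    _ = u⁻¹ * ρ g * u⁻¹⁻¹ := by
        rw [← hu.2, inv_inv, ← mul_assoc, ← mul_assoc, (hχ.commute g u⁻¹).eq, mul_assoc (u⁻¹),
          ← mul_assoc (χ g), hχ.mul_self_apply, one_mul]

theorem eq_one_or_neg_one (hirr : IsIrred ρ) (hu : IsTwistingUnit ρ (fun _ => 1) u) :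
    u = 1 ∨ u = -1 := by
  refine hirr u hu.1 fun g => ?_
  have := hu.2 g
  rw [one_mul, eq_mul_inv_iff_mul_eq₀ hu.ne_zero] at this
  exact this.symm

theorem re_eq_zero (hρ : ∀ g, ‖ρ g‖ = 1) (hirr : IsIrred ρ) (hχ : IsSignHom χ)
    (hχ1 : χ ≠ fun _ => 1) (hu : IsTwistingUnit ρ χ u) : u.re = 0 := by
  have hsq : IsTwistingUnit ρ (fun _ => 1) (u * u) := by
    simpa only [hχ.mul_self_apply] using hu.mul hu hχ
  rcases hsq.eq_one_or_neg_one hirr with h | h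
  · refine absurd (funext fun g => ?_) hχ1
    have hρg : ρ g ≠ 0 := norm_ne_zero_iff.mp ((hρ g).symm ▸ one_ne_zero)
    refine mul_right_cancel₀ hρg ?_
    rcases mul_self_eq_one_iff.mp h with rfl | rfl <;> simp [hu.2 g]
  · exact re_eq_zero_of_mul_self_eq_neg_one hu.1 h

theorem inner_eq_zero (hρ : ∀ g, ‖ρ g‖ = 1) (hirr : IsIrred ρ) (hχ : IsSignHom χ)
    (hψ : IsSignHom ψ) (hχψ : χ ≠ ψ) (hu : IsTwistingUnit ρ χ u) (hv : IsTwistingUnit ρ ψ v) :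
    inner ℝ u v = 0 := by
  rw [inner_def, ← inv_eq_star_of_norm_eq_one hv.1]
  exact (hu.mul (hv.inv hψ) hψ).re_eq_zero hρ hirr (hχ.mul hψ)
    fun h => hχψ (hψ.eq_of_mul_eq_one h)

end IsTwistingUnit

namespace twistStabilizer

variable [Group G] {ρ χ ψ : G → ℍ[ℝ]}

theorem one_mem (ρ : G → ℍ[ℝ]) : (fun _ => 1) ∈ twistStabilizer ρ :=
  ⟨IsSignHom.one, 1, IsTwistingUnit.one_left ρ⟩

theorem mul_mem (hχ : χ ∈ twistStabilizer ρ) (hψ : ψ ∈ twistStabilizer ρ) :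
    (fun g => χ g * ψ g) ∈ twistStabilizer ρ :=
  let ⟨hχ, u, hu⟩ := hχ
  let ⟨hψ, v, hv⟩ := hψ
  ⟨hχ.mul hψ, u * v, hu.mul hv hψ⟩

theorem inv_mem (hχ : χ ∈ twistStabilizer ρ) : (fun g => (χ g)⁻¹) ∈ twistStabilizer ρ := by
  simpa only [hχ.1.inv_apply] using hχ

theorem finite_and_ncard_le_four
    (hρ : ∀ g, ‖ρ g‖ = 1) (hirr : IsIrred ρ) :
    (twistStabilizer ρ).Finite ∧ (twistStabilizer ρ).ncard ≤ 4 := by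
  classical
  choose u hu using fun χ : twistStabilizer ρ => χ.2.2
  have hon : Orthonormal ℝ u := by
    refine orthonormal_iff_ite.mpr fun χ ψ => ?_
    split_ifs with h
    · rw [h, real_inner_self_eq_norm_sq, (hu ψ).1, one_pow]
    · exact (hu χ).inner_eq_zero hρ hirr χ.2.1 ψ.2.1 (Subtype.coe_injective.ne h) (hu ψ)
  have hli := hon.linearIndependent
  have := hli.finite
  have := Fintype.ofFinite (twistStabilizer ρ)
  refine ⟨Set.toFinite _, ?_⟩
  rw [← Nat.card_coe_set_eq, Nat.card_eq_fintype_card, ← finrank_eq_four (R := ℝ)]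
  exact hli.fintype_card_le_finrank

end twistStabilizer

end

/-- For an irreducible projective representation `ρ`, the set of sign homomorphisms `χ` with
`ρ^χ` conjugate to `ρ` is a subgroup of `Hom(G,{±1})` having at most four elements. -/
theorem stabilizer_subgroup_card_le_four {G : Type*} [Group G] (ρ : G → ℍ[ℝ])
    (hρ : IsProjRep ρ) (hirr : IsIrred ρ) :
    ((fun _ : G => (1 : ℍ[ℝ])) ∈
        {χ : G → ℍ[ℝ] | IsSignHom χ ∧
          ∃ u : ℍ[ℝ], ‖u‖ = 1 ∧ ∀ g : G, χ g * ρ g = u * ρ g * u⁻¹} ∧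
      (∀ χ₁ ∈ {χ : G → ℍ[ℝ] | IsSignHom χ ∧
          ∃ u : ℍ[ℝ], ‖u‖ = 1 ∧ ∀ g : G, χ g * ρ g = u * ρ g * u⁻¹},
        ∀ χ₂ ∈ {χ : G → ℍ[ℝ] | IsSignHom χ ∧
          ∃ u : ℍ[ℝ], ‖u‖ = 1 ∧ ∀ g : G, χ g * ρ g = u * ρ g * u⁻¹},
        (fun g : G => χ₁ g * χ₂ g) ∈ {χ : G → ℍ[ℝ] | IsSignHom χ ∧
          ∃ u : ℍ[ℝ], ‖u‖ = 1 ∧ ∀ g : G, χ g * ρ g = u * ρ g * u⁻¹}) ∧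
      (∀ χ₁ ∈ {χ : G → ℍ[ℝ] | IsSignHom χ ∧
          ∃ u : ℍ[ℝ], ‖u‖ = 1 ∧ ∀ g : G, χ g * ρ g = u * ρ g * u⁻¹},
        (fun g : G => (χ₁ g)⁻¹) ∈ {χ : G → ℍ[ℝ] | IsSignHom χ ∧
          ∃ u : ℍ[ℝ], ‖u‖ = 1 ∧ ∀ g : G, χ g * ρ g = u * ρ g * u⁻¹})) ∧
    ({χ : G → ℍ[ℝ] | IsSignHom χ ∧
        ∃ u : ℍ[ℝ], ‖u‖ = 1 ∧ ∀ g : G, χ g * ρ g = u * ρ g * u⁻¹}.Finite ∧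
      {χ : G → ℍ[ℝ] | IsSignHom χ ∧
        ∃ u : ℍ[ℝ], ‖u‖ = 1 ∧ ∀ g : G, χ g * ρ g = u * ρ g * u⁻¹}.ncard ≤ 4) :=
  ⟨⟨twistStabilizer.one_mem ρ, fun _ hχ _ hψ => twistStabilizer.mul_mem hχ hψ,
      fun _ hχ => twistStabilizer.inv_mem hχ⟩,
    twistStabilizer.finite_and_ncard_le_four hρ.1 hirr⟩
end
end

section
/- Let G be a group, ρ: G → Sp(1) an irreducible projective representation, χ: G → {±1} a nontrivial group homomorphism, and u ∈ Sp(1) such that χ(g)ρ(g) = u ρ(g) u⁻¹ for all g ∈ G. Then u² = −1; in particular u is a purely imaginary unit quaternion and u ∉ {±1}. -/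
noncomputable section

open Quaternion

/-- If `ρ` is irreducible and `χ` is a nontrivial sign homomorphism with `ρ^χ = u ρ u⁻¹`,
then `u² = -1`; in particular `u` is purely imaginary and `u ∉ {±1}`. -/
theorem conjugator_squares_to_minus_one {G : Type*} [Group G] (ρ : G → ℍ[ℝ])
    (hρ : IsProjRep ρ) (hirr : IsIrred ρ)
    (χ : G → ℍ[ℝ]) (hχ : IsSignHom χ) (hχ1 : ∃ g : G, χ g ≠ 1)
    (u : ℍ[ℝ]) (hu : ‖u‖ = 1) (huχ : ∀ g : G, χ g * ρ g = u * ρ g * u⁻¹) :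
    u ^ 2 = -1 ∧ u.re = 0 ∧ u ≠ 1 ∧ u ≠ -1 := by
  have hu0 : u ≠ 0 := by
    intro h; rw [h] at hu; simp at hu
  have hρ0 : ∀ g : G, ρ g ≠ 0 := by
    intro g h
    have := hρ.1 g
    rw [h] at this; simp at this
  -- key: u * ρ g = χ g * ρ g * u
  have key : ∀ g : G, u * ρ g = χ g * ρ g * u := by
    intro g
    have h := huχ g
    have : χ g * ρ g * u = u * ρ g * u⁻¹ * u := by rw [h]
    rw [mul_assoc (u * ρ g), inv_mul_cancel₀ hu0, mul_one] at this
    exact this.symm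
  have hcomm : ∀ g : G, u ^ 2 * ρ g = ρ g * u ^ 2 := by
    intro g
    have h1 := key g
    calc u ^ 2 * ρ g = u * (u * ρ g) := by rw [pow_two, mul_assoc]
      _ = u * (χ g * ρ g * u) := by rw [h1]
      _ = χ g * (u * ρ g) * u := by
          rcases hχ.1 g with h | h <;> rw [h] <;> noncomm_ring
      _ = χ g * (χ g * ρ g * u) * u := by rw [h1]
      _ = ρ g * u ^ 2 := by
          rcases hχ.1 g with h | h <;> rw [h] <;> noncomm_ring
  have hnorm2 : ‖u ^ 2‖ = 1 := by
    rw [norm_pow, hu, one_pow]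
  have hsq : u ^ 2 = -1 := by
    rcases hirr (u ^ 2) hnorm2 hcomm with h | h
    · -- u ^ 2 = 1, so u = ±1, so conjugation is trivial, contradiction
      exfalso
      have hu1 : u = 1 ∨ u = -1 := by
        have hfac : (u - 1) * (u + 1) = 0 := by
          have h2 : (u - 1) * (u + 1) = u ^ 2 - 1 := by noncomm_ring
          rw [h2, h, sub_self]
        rcases mul_eq_zero.mp hfac with h' | h'
        · left; exact sub_eq_zero.mp h'
        · right; exact eq_neg_of_add_eq_zero_left h'
      obtain ⟨g, hg⟩ := hχ1
      apply hg
      have hconj : u * ρ g * u⁻¹ = ρ g := by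
        rcases hu1 with h' | h' <;> rw [h'] <;> simp [inv_neg]
      have := huχ g
      rw [hconj] at this
      have := mul_right_cancel₀ (hρ0 g) (this.trans (one_mul (ρ g)).symm)
      exact this
    · exact h
  refine ⟨hsq, ?_, ?_, ?_⟩
  · -- purely imaginary
    have h1 : (u ^ 2).re = -1 := by rw [hsq]; simp
    have h2 : u.re ^ 2 - u.imI ^ 2 - u.imJ ^ 2 - u.imK ^ 2 = -1 := by
      rw [pow_two] at h1
      rw [Quaternion.re_mul] at h1
      nlinarith [h1]
    have h3 : u.re ^ 2 + u.imI ^ 2 + u.imJ ^ 2 + u.imK ^ 2 = 1 := by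
      have h4 := Quaternion.normSq_eq_norm_mul_self u
      rw [hu, one_mul, Quaternion.normSq_def'] at h4
      nlinarith [h4]
    nlinarith [h2, h3, sq_nonneg u.re]
  · intro h
    rw [h, one_pow] at hsq
    have h5 := congrArg QuaternionAlgebra.re hsq
    norm_num at h5
  · intro h; rw [h] at hsq
    have h5 : (((-1 : ℍ[ℝ]) ^ 2)).re = ((-1 : ℍ[ℝ])).re := by rw [hsq]
    norm_num at h5
end
end

section
/- Let G be a group, ρ: G → Sp(1) an irreducible projective representation, and α, β: G → {±1} group homomorphisms with α ≠ 1, β ≠ 1, α ≠ β. Suppose u, v ∈ Sp(1) satisfy α(g)ρ(g) = u ρ(g) u⁻¹ and β(g)ρ(g) = v ρ(g) v⁻¹ for all g ∈ G. Then u and v anticommute: u·v = −v·u. -/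
/-!
Conjugation by `u` multiplies each `ρ g` by the sign `α g`, and conjugation by `v` by `β g`.
Hence `uv` and `vu` both twist `ρ` by `αβ`, so `(vu)⁻¹uv` centralizes `ρ` and is `±1`.
If it were `1`, then `u`, `v` and `uv` would be unit quaternions twisting `ρ` by the nontrivial
signs `α`, `β`, `αβ`. Such an `x` has `x²` in the centralizer, so `x² = ±1`, and `x² = 1` would
give `x = ±1` and a trivial twist. Thus `u² = v² = (uv)² = -1`, while commuting `u`, `v` give
`(uv)² = u²v² = 1`.
-/

noncomputable section

open Quaternion

section

variable {G R : Type*}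

/-- `x` conjugates `ρ` into its twist `g ↦ χ g * ρ g`, stated without inverses. -/
def TwistsBy [Mul R] (ρ χ : G → R) (x : R) : Prop :=
  ∀ g, x * ρ g = χ g * ρ g * x

lemma commute_of_eq_one_or_eq_neg_one_s12 [Ring R] (x : R) {s : R} (hs : s = 1 ∨ s = -1) :
    Commute x s := by
  rcases hs with rfl | rfl
  exacts [Commute.one_right x, Commute.neg_one_right x]

lemma exists_mul_ne_one_of_ne [Monoid R] {α β : G → R} (hβ : ∀ g, β g * β g = 1)
    (hαβ : α ≠ β) : ∃ g, α g * β g ≠ 1 := by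
  obtain ⟨g, hg⟩ := Function.ne_iff.mp hαβ
  refine ⟨g, fun h => hg ?_⟩
  rw [← mul_one (α g), ← hβ g, ← mul_assoc, h, one_mul]

namespace TwistsBy

variable {ρ χ ψ : G → R} {x y : R}

lemma of_conj [DivisionRing R] (hx : x ≠ 0) (h : ∀ g, χ g * ρ g = x * ρ g * x⁻¹) :
    TwistsBy ρ χ x := fun g => by
  rw [h g, inv_mul_cancel_right₀ hx]

lemma mul [Ring R] (hx : TwistsBy ρ χ x) (hy : TwistsBy ρ ψ y) (hψ : ∀ g, ψ g = 1 ∨ ψ g = -1) :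
    TwistsBy ρ (fun g => χ g * ψ g) (x * y) := fun g => by
  have hψx := commute_of_eq_one_or_eq_neg_one_s12 x (hψ g)
  have hψχ := commute_of_eq_one_or_eq_neg_one_s12 (χ g) (hψ g)
  calc x * y * ρ g = x * (ψ g * ρ g * y) := by rw [mul_assoc, hy g]
    _ = ψ g * (x * ρ g) * y := by simp only [← mul_assoc, hψx.eq]
    _ = ψ g * χ g * ρ g * (x * y) := by rw [hx g]; simp only [mul_assoc]
    _ = χ g * ψ g * ρ g * (x * y) := by rw [hψχ.eq]

lemma mul_self [Ring R] (hx : TwistsBy ρ χ x) (hχ : ∀ g, χ g = 1 ∨ χ g = -1) (g : G) :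
    x * x * ρ g = ρ g * (x * x) := by
  have hχχ : χ g * χ g = 1 := by rcases hχ g with h | h <;> simp [h]
  simpa [hχχ] using hx.mul hx hχ g

lemma apply_eq_one [Ring R] [NoZeroDivisors R] (h : TwistsBy ρ χ x) (hx : x = 1 ∨ x = -1)
    {g : G} (hρ : ρ g ≠ 0) : χ g = 1 := by
  have hρχ : ρ g = χ g * ρ g := by
    rcases hx with rfl | rfl
    · simpa using h g
    · simpa using h g
  have : (χ g - 1) * ρ g = 0 := by rw [sub_mul, ← hρχ, one_mul, sub_self]
  exact sub_eq_zero.mp ((mul_eq_zero.mp this).resolve_right hρ)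

lemma inv_mul_commute [DivisionRing R] (hx : TwistsBy ρ χ x) (hy : TwistsBy ρ χ y) (hx0 : x ≠ 0)
    (g : G) : x⁻¹ * y * ρ g = ρ g * (x⁻¹ * y) := by
  have hx' : x⁻¹ * (χ g * ρ g) = ρ g * x⁻¹ := by
    rw [← mul_inv_cancel_right₀ hx0 (χ g * ρ g), ← hx g]
    simp only [mul_assoc, inv_mul_cancel_left₀ hx0]
  rw [mul_assoc, hy g, ← mul_assoc x⁻¹, hx', mul_assoc]

lemma mul_self_eq_neg_one [Group G] {ρ χ : G → ℍ[ℝ]} {x : ℍ[ℝ]} (h : TwistsBy ρ χ x)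
    (hirr : IsIrred ρ) (hρ0 : ∀ g, ρ g ≠ 0) (hχ : ∀ g, χ g = 1 ∨ χ g = -1)
    (hχ1 : ∃ g, χ g ≠ 1) (hx : ‖x‖ = 1) : x * x = -1 := by
  refine (hirr (x * x) (by rw [norm_mul, hx, one_mul]) (h.mul_self hχ)).resolve_left
    fun hsq => ?_
  obtain ⟨g, hg⟩ := hχ1
  exact hg (h.apply_eq_one (mul_self_eq_one_iff.mp hsq) (hρ0 g))

end TwistsBy

end

/-- If `ρ` is irreducible and `u`, `v` conjugate `ρ` to its twists by distinct nontrivial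
sign homomorphisms `α` and `β`, then `u` and `v` anticommute. -/
theorem conjugators_anticommute {G : Type*} [Group G] (ρ : G → ℍ[ℝ])
    (hρ : IsProjRep ρ) (hirr : IsIrred ρ)
    (α β : G → ℍ[ℝ]) (hα : IsSignHom α) (hβ : IsSignHom β)
    (hα1 : ∃ g : G, α g ≠ 1) (hβ1 : ∃ g : G, β g ≠ 1) (hαβ : α ≠ β)
    (u v : ℍ[ℝ]) (hu : ‖u‖ = 1) (hv : ‖v‖ = 1)
    (huα : ∀ g : G, α g * ρ g = u * ρ g * u⁻¹)
    (hvβ : ∀ g : G, β g * ρ g = v * ρ g * v⁻¹) :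
    u * v = -(v * u) := by
  have hρ0 (g : G) : ρ g ≠ 0 := norm_ne_zero_iff.mp (by rw [hρ.1 g]; exact one_ne_zero)
  have hu0 : u ≠ 0 := norm_ne_zero_iff.mp (by rw [hu]; exact one_ne_zero)
  have hv0 : v ≠ 0 := norm_ne_zero_iff.mp (by rw [hv]; exact one_ne_zero)
  have hU := TwistsBy.of_conj hu0 huα
  have hV := TwistsBy.of_conj hv0 hvβ
  have hUV := hU.mul hV hβ.1
  have hVU : TwistsBy ρ (fun g => α g * β g) (v * u) := fun g => by
    simpa only [(commute_of_eq_one_or_eq_neg_one_s12 (β g) (hα.1 g)).eq] using hV.mul hU hα.1 g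
  have hvu0 : v * u ≠ 0 := mul_ne_zero hv0 hu0
  rcases hirr ((v * u)⁻¹ * (u * v)) (by simp [norm_mul, norm_inv, hu, hv])
      (hVU.inv_mul_commute hUV hvu0) with hq | hq
  · have hcomm : u * v = v * u := by rw [← mul_inv_cancel_left₀ hvu0 (u * v), hq, mul_one]
    have huu := hU.mul_self_eq_neg_one hirr hρ0 hα.1 hα1 hu
    have hvv := hV.mul_self_eq_neg_one hirr hρ0 hβ.1 hβ1 hv
    have hαβ_sign (g : G) : α g * β g = 1 ∨ α g * β g = -1 := by
      rcases hα.1 g with h | h <;> rcases hβ.1 g with h' | h' <;> simp [h, h']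
    have huvuv := hUV.mul_self_eq_neg_one hirr hρ0 hαβ_sign
      (exists_mul_ne_one_of_ne (fun g => mul_self_eq_one_iff.mpr (hβ.1 g)) hαβ)
      (by rw [norm_mul, hu, hv, one_mul])
    have huvuv' : u * v * (u * v) = 1 := by
      rw [mul_assoc, ← mul_assoc v, ← hcomm, ← mul_assoc, ← mul_assoc, huu, mul_assoc, hvv]
      norm_num
    exact absurd (congrArg QuaternionAlgebra.re (huvuv'.symm.trans huvuv)) (by norm_num)
  · rw [← mul_inv_cancel_left₀ hvu0 (u * v), hq, mul_neg_one]
end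
end

section
/- Let G be a group, V a Klein four subgroup of SO(3), and fix an isomorphism V ≅ (ℤ/2)², so that a homomorphism f: G → V has components f₁, f₂ ∈ Hom(G, ℤ/2). Two surjective homomorphisms f, g: G → V are conjugate in SO(3) (i.e., there exists h ∈ SO(3) with g(x) = h·f(x)·h⁻¹ for all x ∈ G) if and only if f₁ ∧ f₂ = g₁ ∧ g₂ in the exterior power ⋀²(Hom(G, ℤ/2)). -/
/-!
A surjection `f : G → V ≅ (ℤ/2)²` is determined by its kernel up to an automorphism of `V`, and
every automorphism of a Klein four subgroup `V` of SO(3) is induced by conjugation: the three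
involutions in `V` are half-turns about mutually orthogonal axes, and any permutation of an
orthonormal frame is realised, up to a sign that does not change half-turns, by a rotation. So
`f` and `g` are conjugate iff `ker f = ker g`.

If `g = A ∘ f` with `A ∈ GL₂(𝔽₂) = SL₂(𝔽₂)`, then `g₁ ∧ g₂ = det A • f₁ ∧ f₂ = f₁ ∧ f₂`.
Conversely, evaluating `f₁ ∧ f₂` on the alternating forms `(φ, ψ) ↦ φ x * ψ y - ψ x * φ y`
recovers `ker f` as the set of `x` with `det (f x, f y) = 0` for all `y`.
-/

noncomputable section

set_option synthInstance.maxHeartbeats 1000000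
set_option maxHeartbeats 1000000

/-- `Hom(G, ℤ/2)` as an `F₂`-vector space: the submodule of `G → ZMod 2` consisting of
group homomorphisms. -/
def HomGZ2 (G : Type*) [Group G] : Submodule (ZMod 2) (G → ZMod 2) where
  carrier := {φ | ∀ a b : G, φ (a * b) = φ a + φ b}
  zero_mem' := by intro a b; simp
  add_mem' := by
    intro φ ψ hφ hψ a b
    simp only [Pi.add_apply, hφ a b, hψ a b]
    abel
  smul_mem' := by
    intro c φ hφ a b
    simp only [Pi.smul_apply, hφ a b, smul_add]

namespace ExteriorAlgebra

variable {R M : Type*} [CommRing R] [AddCommGroup M] [Module R M]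

theorem alternatingMap_eq_of_ι_mul_ι_eq {N : Type*} [AddCommGroup N] [Module R N]
    (D : M [⋀^Fin 2]→ₗ[R] N)
    {u v u' v' : M} (h : ι R u * ι R v = ι R u' * ι R v') : D ![u, v] = D ![u', v'] := by
  have hι : ∀ a b : M, ι R a * ι R b = ιMulti R 2 ![a, b] := fun a b => by
    rw [ιMulti_apply]; simp [List.ofFn_succ]
  have := congrArg (liftAlternating (Pi.single (M := fun i => M [⋀^Fin i]→ₗ[R] N) 2 D)) h
  rwa [hι, hι, liftAlternating_apply_ιMulti, liftAlternating_apply_ιMulti,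
    Pi.single_eq_same] at this

theorem apply_mul_apply_sub_eq_of_ι_mul_ι_eq (φ χ : M →ₗ[R] R)
    {u v u' v' : M} (h : ι R u * ι R v = ι R u' * ι R v') :
    φ u * χ v - χ u * φ v = φ u' * χ v' - χ u' * φ v' := by
  let D := (Matrix.detRowAlternating (n := Fin 2)).compLinearMap (LinearMap.pi ![φ, χ])
  have hD : ∀ a b : M, D ![a, b] = φ a * χ b - χ a * φ b := fun a b =>
    (Matrix.det_fin_two _).trans (by simp)
  rw [← hD, ← hD, alternatingMap_eq_of_ι_mul_ι_eq D h]

theorem ι_add_mul_ι_add (a b c d : R) (u v : M) :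
    ι R (a • u + b • v) * ι R (c • u + d • v) = (a * d - b * c) • (ι R u * ι R v) := by
  have hvu : ι R v * ι R u = -(ι R u * ι R v) := eq_neg_of_add_eq_zero_left (ι_add_mul_swap v u)
  simp only [map_add, map_smul, add_mul, mul_add, smul_mul_smul_comm, ι_sq_zero, hvu, smul_zero,
    smul_neg, sub_smul, mul_comm b c]
  abel

end ExteriorAlgebra

theorem Prod.eq_zero_iff_forall_mul_sub_mul_eq_zero {R : Type*} [CommRing R] (z : R × R) :
    z = 0 ↔ ∀ w : R × R, z.1 * w.2 - w.1 * z.2 = 0 := by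
  refine ⟨fun h w => by simp [h], fun h => ?_⟩
  have h₁ := h (0, 1)
  have h₂ := h (1, 0)
  simp only [mul_one, mul_zero, zero_mul, one_mul, sub_zero, zero_sub, neg_eq_zero] at h₁ h₂
  exact Prod.ext h₁ h₂

theorem MonoidHom.exists_mulEquiv_apply_eq_of_ker_eq {G H : Type*} [Group G] [Group H]
    {f g : G →* H} (hf : Function.Surjective f) (hg : Function.Surjective g) (h : f.ker = g.ker) :
    ∃ α : H ≃* H, ∀ x, g x = α (f x) :=
  ⟨((QuotientGroup.quotientKerEquivOfSurjective f hf).symm.trans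
    (QuotientGroup.quotientMulEquivOfEq h)).trans (QuotientGroup.quotientKerEquivOfSurjective g hg),
    fun x => by
      have : (QuotientGroup.quotientKerEquivOfSurjective f hf).symm (f x) = (x : G ⧸ f.ker) :=
        (MulEquiv.symm_apply_eq _).2 rfl
      simp only [MulEquiv.trans_apply, this]
      rfl⟩

theorem IsKleinFour.of_mulEquiv {G H : Type*} [Group G] [Group H] [IsKleinFour H] (e : G ≃* H) :
    IsKleinFour G where
  card_four := by rw [Nat.card_congr e.toEquiv, IsKleinFour.card_four]
  exponent_two := by rw [Monoid.exponent_eq_of_mulEquiv e, IsKleinFour.exponent_two]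

namespace HomGZ2

variable {G : Type*} [Group G] (f₁ f₂ g₁ g₂ : ↥(HomGZ2 G))

open ExteriorAlgebra

theorem ι_mul_ι_eq_of_addEquiv (A : (ZMod 2 × ZMod 2) ≃+ (ZMod 2 × ZMod 2))
    (h : ∀ x, ((g₁ : G → ZMod 2) x, (g₂ : G → ZMod 2) x) =
      A ((f₁ : G → ZMod 2) x, (f₂ : G → ZMod 2) x)) :
    ι (ZMod 2) f₁ * ι (ZMod 2) f₂ = ι (ZMod 2) g₁ * ι (ZMod 2) g₂ := by
  set p := A (1, 0)
  set q := A (0, 1)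
  have hA : ∀ x, A ((f₁ : G → ZMod 2) x, (f₂ : G → ZMod 2) x)
      = (f₁ : G → ZMod 2) x • p + (f₂ : G → ZMod 2) x • q := by
    intro x
    rw [← ZMod.map_smul, ← ZMod.map_smul, ← map_add]
    simp
  have hg₁ : g₁ = p.1 • f₁ + q.1 • f₂ := Subtype.ext <| funext fun x => by
    simpa [hA, mul_comm] using congrArg Prod.fst (h x)
  have hg₂ : g₂ = p.2 • f₁ + q.2 • f₂ := Subtype.ext <| funext fun x => by
    simpa [hA, mul_comm] using congrArg Prod.snd (h x)
  -- the only invertible 2 × 2 matrices over `ZMod 2` have determinant one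
  have hdet : ∀ p q : ZMod 2 × ZMod 2, p ≠ 0 → q ≠ 0 → p ≠ q → p.1 * q.2 - q.1 * p.2 = 1 := by
    decide
  have hp : p ≠ 0 := by simp [p]
  have hq : q ≠ 0 := by simp [q]
  have hpq : p ≠ q := by simp [p, q]
  rw [hg₁, hg₂, ι_add_mul_ι_add, hdet p q hp hq hpq, one_smul]

theorem eq_zero_iff_of_ι_mul_ι_eq
    (hf : Function.Surjective fun x => ((f₁ : G → ZMod 2) x, (f₂ : G → ZMod 2) x))
    (hg : Function.Surjective fun x => ((g₁ : G → ZMod 2) x, (g₂ : G → ZMod 2) x))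
    (h : ι (ZMod 2) f₁ * ι (ZMod 2) f₂ = ι (ZMod 2) g₁ * ι (ZMod 2) g₂) (x : G) :
    ((f₁ : G → ZMod 2) x, (f₂ : G → ZMod 2) x) = 0 ↔
      ((g₁ : G → ZMod 2) x, (g₂ : G → ZMod 2) x) = 0 := by
  rw [Prod.eq_zero_iff_forall_mul_sub_mul_eq_zero, Prod.eq_zero_iff_forall_mul_sub_mul_eq_zero,
    hf.forall, hg.forall]
  refine forall_congr' fun y => ?_
  have := apply_mul_apply_sub_eq_of_ι_mul_ι_eq
    ((LinearMap.proj x).comp (HomGZ2 G).subtype) ((LinearMap.proj y).comp (HomGZ2 G).subtype) h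
  simp only [LinearMap.coe_comp, Function.comp_apply, Submodule.coe_subtype,
    LinearMap.coe_proj, Function.eval] at this
  rw [this]

end HomGZ2

open Matrix

theorem Matrix.det_sub_one_eq_zero {n : Type*} [Fintype n] [DecidableEq n]
    (hn : Odd (Fintype.card n)) {A : Matrix n n ℝ} (hA : Aᵀ * A = 1) (hdet : A.det = 1) :
    (A - 1).det = 0 := by
  have h : (A - 1).det = (1 - A).det := by
    calc (A - 1).det = (Aᵀ * (A - 1)).det := by rw [det_mul, det_transpose, hdet, one_mul]
      _ = (1 - A)ᵀ.det := by rw [mul_sub, hA, mul_one, transpose_sub, transpose_one]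
      _ = (1 - A).det := det_transpose _
  rw [show 1 - A = -(A - 1) by abel, det_neg, hn.neg_one_pow, neg_one_mul] at h
  linarith

theorem exists_smul_dotProduct_self_eq_one {n : Type*} [Fintype n] {v : n → ℝ} (hv : v ≠ 0) :
    ∃ t : ℝ, (t • v) ⬝ᵥ (t • v) = 1 := by
  have hpos : 0 < v ⬝ᵥ v := by simpa using dotProduct_self_star_pos_iff.mpr hv
  refine ⟨(Real.sqrt (v ⬝ᵥ v))⁻¹, ?_⟩
  rw [smul_dotProduct, dotProduct_smul, smul_eq_mul, smul_eq_mul, ← mul_assoc, ← mul_inv,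
    Real.mul_self_sqrt hpos.le, inv_mul_cancel₀ hpos.ne']

theorem Matrix.of_mul_transpose_of_apply {ι n R : Type*} [Fintype n] [Mul R] [AddCommMonoid R]
    (v : ι → n → R) (i j : ι) : (of v * (of v)ᵀ) i j = v i ⬝ᵥ v j := rfl

theorem Matrix.mulVec_cross {R : Type*} [CommRing R] {A : Matrix (Fin 3) (Fin 3) R}
    (hA : Aᵀ * A = 1) (hdet : A.det = 1) (u v : Fin 3 → R) :
    A *ᵥ (u ⨯₃ v) = (A *ᵥ u) ⨯₃ (A *ᵥ v) := by
  have hA' : A * Aᵀ = 1 := mul_eq_one_comm.mp hA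
  -- both sides have the same dot product with every `w`, by the triple product formula
  have hrows (w : Fin 3 → R) :
      of ![w ᵥ* A, u, v] * Aᵀ = of ![w, A *ᵥ u, A *ᵥ v] := by
    funext i
    rw [mul_apply_eq_vecMul]
    fin_cases i
    · exact (vecMul_vecMul w A Aᵀ).trans (by rw [hA', vecMul_one]; rfl)
    · exact vecMul_transpose A u
    · exact vecMul_transpose A v
  have hdot (w : Fin 3 → R) : w ⬝ᵥ A *ᵥ (u ⨯₃ v) = w ⬝ᵥ (A *ᵥ u) ⨯₃ (A *ᵥ v) := by
    calc w ⬝ᵥ A *ᵥ (u ⨯₃ v) = det (of ![w ᵥ* A, u, v]) := by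
          rw [dotProduct_mulVec, triple_product_eq_det]; rfl
      _ = det (of ![w, A *ᵥ u, A *ᵥ v]) := by rw [← hrows, det_mul, det_transpose, hdet, mul_one]
      _ = w ⬝ᵥ (A *ᵥ u) ⨯₃ (A *ᵥ v) := by rw [triple_product_eq_det]; rfl
  ext i
  simpa [single_one_dotProduct] using hdot (Pi.single i 1)

theorem Matrix.eq_one_of_mulVec_eq_self {A : Matrix (Fin 3) (Fin 3) ℝ} (hA : Aᵀ * A = 1)
    (hdet : A.det = 1) {a b : Fin 3 → ℝ} (ha : a ⬝ᵥ a = 1) (hb : b ⬝ᵥ b = 1) (hab : a ⬝ᵥ b = 0)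
    (hAa : A *ᵥ a = a) (hAb : A *ᵥ b = b) : A = 1 := by
  have hAc : A *ᵥ (a ⨯₃ b) = a ⨯₃ b := by rw [mulVec_cross hA hdet, hAa, hAb]
  set M := of ![a, b, a ⨯₃ b]
  have hM : Mᵀ * M = 1 := by
    refine mul_eq_one_comm.mp (ext fun i j => ?_)
    rw [of_mul_transpose_of_apply]
    fin_cases i <;> fin_cases j <;>
      simp [ha, hb, hab, dotProduct_comm b a, dotProduct_comm (a ⨯₃ b), cross_dot_cross,
        dot_self_cross, dot_cross_self]
  have hMA : M * Aᵀ = M := by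
    funext i
    rw [mul_apply_eq_vecMul, vecMul_transpose]
    fin_cases i
    exacts [hAa, hAb, hAc]
  have hAT : Aᵀ = 1 := by
    calc Aᵀ = Mᵀ * M * Aᵀ := by rw [hM, Matrix.one_mul]
      _ = 1 := by rw [Matrix.mul_assoc, hMA, hM]
  simpa using congrArg transpose hAT

-- a rotation (by `π` about `a`) only when `a ⬝ᵥ a = 1`
def halfTurn (a : Fin 3 → ℝ) : Matrix (Fin 3) (Fin 3) ℝ := (2 : ℝ) • vecMulVec a a - 1

theorem halfTurn_mulVec (a x : Fin 3 → ℝ) : halfTurn a *ᵥ x = (2 * (a ⬝ᵥ x)) • a - x := by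
  rw [halfTurn, sub_mulVec, smul_mulVec, one_mulVec, vecMulVec_mulVec, op_smul_eq_smul, smul_smul]

theorem halfTurn_smul {s : ℝ} (hs : s * s = 1) (a : Fin 3 → ℝ) : halfTurn (s • a) = halfTurn a := by
  rw [halfTurn, halfTurn, smul_vecMulVec, vecMulVec_smul, smul_smul s s, hs, one_smul]

theorem mul_halfTurn_mul_transpose {H : Matrix (Fin 3) (Fin 3) ℝ} (hH : H * Hᵀ = 1)
    (a : Fin 3 → ℝ) : H * halfTurn a * Hᵀ = halfTurn (H *ᵥ a) := by
  rw [halfTurn, halfTurn, mul_sub, sub_mul, mul_one, hH, Matrix.mul_smul, Matrix.smul_mul,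
    mul_vecMulVec, vecMulVec_mul, vecMul_transpose]

theorem dotProduct_eq_zero_of_commute_halfTurn {a b : Fin 3 → ℝ} (ha : a ⬝ᵥ a = 1)
    (hb : b ⬝ᵥ b = 1) (hcomm : Commute (halfTurn a) (halfTurn b))
    (hne : halfTurn a ≠ halfTurn b) : a ⬝ᵥ b = 0 := by
  by_contra ht
  set t := a ⬝ᵥ b
  -- `halfTurn a *ᵥ b` is fixed by `halfTurn b`, hence a multiple of `b`
  have hfix : halfTurn b *ᵥ (halfTurn a *ᵥ b) = halfTurn a *ᵥ b := by
    rw [mulVec_mulVec, ← hcomm.eq, ← mulVec_mulVec, halfTurn_mulVec b b, hb]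
    congr 1
    module
  rw [halfTurn_mulVec a b, halfTurn_mulVec, dotProduct_sub, dotProduct_smul, hb,
    dotProduct_comm b a, smul_eq_mul] at hfix
  have hab : a = t • b := by
    have h4 : (4 * t) • (a - t • b) = 0 := by linear_combination (norm := module) -hfix
    rcases smul_eq_zero.mp h4 with h | h
    · exact absurd (by linarith : t = 0) ht
    · exact sub_eq_zero.mp h
  have htt : t * t = 1 := by
    rw [hab, smul_dotProduct, dotProduct_smul, hb, smul_eq_mul, smul_eq_mul, mul_one] at ha
    exact ha
  exact hne (by rw [hab, halfTurn_smul htt])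

theorem exists_eq_halfTurn_of_mul_self_eq_one {A : Matrix (Fin 3) (Fin 3) ℝ} (hA : Aᵀ * A = 1)
    (hdet : A.det = 1) (hsq : A * A = 1) (hne : A ≠ 1) : ∃ a, a ⬝ᵥ a = 1 ∧ A = halfTurn a := by
  have hsymm : Aᵀ = A := by
    calc Aᵀ = Aᵀ * A * A := by rw [Matrix.mul_assoc, hsq, Matrix.mul_one]
      _ = A := by rw [hA, Matrix.one_mul]
  obtain ⟨v, hv0, hv⟩ := exists_mulVec_eq_zero_iff.mpr (det_sub_one_eq_zero (by decide) hA hdet)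
  obtain ⟨t, ha⟩ := exists_smul_dotProduct_self_eq_one hv0
  set a := t • v
  have hAa : A *ᵥ a = a := by
    rw [sub_mulVec, one_mulVec, sub_eq_zero] at hv
    rw [mulVec_smul, hv]
  -- `A + 1 - 2 a aᵀ` is twice the projection onto the fixed vectors of `A` orthogonal to `a`
  set B := A + 1 - (2 : ℝ) • vecMulVec a a
  have hAB : A * B = B := by
    simp only [B]
    rw [mul_sub, mul_add, hsq, Matrix.mul_one, Matrix.mul_smul, mul_vecMulVec, hAa]
    abel
  have haB : a ᵥ* B = 0 := by
    rw [vecMul_sub, vecMul_add, vecMul_one, vecMul_smul, vecMul_vecMulVec, ha, ← mulVec_transpose,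
      hsymm, hAa]
    module
  have hB : B = 0 := by
    by_contra hB
    obtain ⟨x, hx⟩ : ∃ x, B *ᵥ x ≠ 0 := by
      by_contra! h
      exact hB (ext_iff_mulVec.mpr fun x => by rw [h, zero_mulVec])
    obtain ⟨s, hb⟩ := exists_smul_dotProduct_self_eq_one hx
    refine hne (eq_one_of_mulVec_eq_self hA hdet ha hb ?_ hAa ?_)
    · rw [dotProduct_smul, dotProduct_mulVec, haB, zero_dotProduct, smul_zero]
    · rw [mulVec_smul, mulVec_mulVec, hAB]
  exact ⟨a, ha, eq_sub_of_add_eq (sub_eq_zero.mp hB)⟩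

theorem exists_mul_halfTurn_mul_transpose_eq {ι : Type*} [Fintype ι] [DecidableEq ι]
    (hι : Fintype.card ι = 3) {a b : ι → Fin 3 → ℝ} (ha : of a * (of a)ᵀ = 1)
    (hb : of b * (of b)ᵀ = 1) :
    ∃ H : Matrix (Fin 3) (Fin 3) ℝ, Hᵀ * H = 1 ∧ H.det = 1 ∧
      ∀ i, H * halfTurn (a i) * Hᵀ = halfTurn (b i) := by
  have haT : (of a)ᵀ * of a = 1 := (mul_eq_one_comm_of_equiv (Fintype.equivFinOfCardEq hι)).mp ha
  set H₀ := (of b)ᵀ * of a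
  have hH₀ : H₀ᵀ * H₀ = 1 := by
    calc H₀ᵀ * H₀ = (of a)ᵀ * (of b * (of b)ᵀ) * of a := by
          simp only [H₀, transpose_mul, transpose_transpose, Matrix.mul_assoc]
      _ = 1 := by rw [hb, Matrix.mul_one, haT]
  have hH₀a (i : ι) : H₀ *ᵥ a i = b i := by
    have hcol (c : ι → Fin 3 → ℝ) : (of c)ᵀ *ᵥ Pi.single i 1 = c i := by
      rw [mulVec_single_one]; rfl
    rw [← hcol a, mulVec_mulVec, Matrix.mul_assoc, ha, Matrix.mul_one, hcol]
  set d := H₀.det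
  have hd : d * d = 1 := by
    simpa [det_mul, det_transpose] using congrArg det hH₀
  -- `d = ±1`, so `d • H₀` has determinant `d ^ 4 = 1` and conjugates half-turns like `H₀`
  refine ⟨d • H₀, ?_, ?_, fun i => ?_⟩
  · rw [transpose_smul, Matrix.smul_mul, Matrix.mul_smul, smul_smul, hd, hH₀, one_smul]
  · rw [det_smul, Fintype.card_fin]
    linear_combination (d * d + 1) * hd
  · have hH : d • H₀ * (d • H₀)ᵀ = 1 := by
      rw [transpose_smul, Matrix.smul_mul, Matrix.mul_smul, smul_smul, hd, one_smul,
        mul_eq_one_comm.mp hH₀]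
    rw [mul_halfTurn_mul_transpose hH, smul_mulVec, hH₀a, halfTurn_smul hd]

namespace SO3

def toMatrix : ↥SO3 →* Matrix (Fin 3) (Fin 3) ℝ :=
  (Matrix.orthogonalGroup (Fin 3) ℝ).subtype.comp SO3.subtype

theorem toMatrix_injective : Function.Injective toMatrix :=
  Subtype.val_injective.comp Subtype.val_injective

theorem transpose_toMatrix_mul_toMatrix (h : ↥SO3) : (toMatrix h)ᵀ * toMatrix h = 1 :=
  (mem_orthogonalGroup_iff' _ _).mp h.1.2

theorem det_toMatrix (h : ↥SO3) : (toMatrix h).det = 1 := h.2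

theorem toMatrix_inv (h : ↥SO3) : toMatrix h⁻¹ = (toMatrix h)ᵀ := rfl

theorem exists_toMatrix_eq {H : Matrix (Fin 3) (Fin 3) ℝ} (hH : Hᵀ * H = 1) (hdet : H.det = 1) :
    ∃ h : ↥SO3, toMatrix h = H :=
  ⟨⟨⟨H, (mem_orthogonalGroup_iff' _ _).mpr hH⟩, hdet⟩, rfl⟩

theorem exists_conj_eq_of_isKleinFour (V : Subgroup ↥SO3) [IsKleinFour V] (α : V ≃* V) :
    ∃ h : ↥SO3, ∀ v : V, (α v : ↥SO3) = h * v * h⁻¹ := by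
  classical
  let M : V → Matrix (Fin 3) (Fin 3) ℝ := fun v => toMatrix v
  have hM_injective : Function.Injective M := toMatrix_injective.comp Subtype.val_injective
  let N := {v : V // v ≠ 1}
  have : Finite V := IsKleinFour.instFinite
  have : Fintype V := .ofFinite V
  have hcard : Fintype.card N = 3 := by
    rw [Fintype.card_subtype_compl, IsKleinFour.card_four', Fintype.card_unique]
  have haxis (n : N) : ∃ a, a ⬝ᵥ a = 1 ∧ M n = halfTurn a := by
    refine exists_eq_halfTurn_of_mul_self_eq_one (transpose_toMatrix_mul_toMatrix _)
      (det_toMatrix _) ?_ ?_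
    · rw [← map_mul, ← Subgroup.coe_mul, IsKleinFour.mul_self]; rfl
    · exact fun h1 => n.2 (hM_injective (h1.trans (map_one toMatrix).symm))
  choose axis hunit haxis using haxis
  have horth : of axis * (of axis)ᵀ = 1 := by
    ext n m
    rw [of_mul_transpose_of_apply, one_apply]
    split_ifs with hnm
    · rw [hnm, hunit]
    · refine dotProduct_eq_zero_of_commute_halfTurn (hunit n) (hunit m) ?_ ?_
      · rw [← haxis, ← haxis]
        exact Commute.map (mul_comm_of_exponent_two IsKleinFour.exponent_two (n : V) m)
          (toMatrix.comp V.subtype)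
      · rw [← haxis, ← haxis]
        exact fun h => hnm (Subtype.ext (hM_injective h))
  let σ : N ≃ N := α.toEquiv.subtypeEquiv fun v => α.map_ne_one_iff.symm
  have horthσ : of (axis ∘ σ) * (of (axis ∘ σ))ᵀ = 1 := by
    ext n m
    have := congrFun (congrFun horth (σ n)) (σ m)
    rw [of_mul_transpose_of_apply] at this ⊢
    simpa [one_apply] using this
  obtain ⟨H, hH, hdet, hconj⟩ := exists_mul_halfTurn_mul_transpose_eq hcard horth horthσ
  obtain ⟨h, rfl⟩ := exists_toMatrix_eq hH hdet
  refine ⟨h, fun v => toMatrix_injective ?_⟩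
  rw [map_mul, map_mul, toMatrix_inv]
  by_cases hv : v = 1
  · simp [hv, mul_eq_one_comm.mp hH]
  · exact (haxis (σ ⟨v, hv⟩)).trans ((hconj ⟨v, hv⟩).symm.trans (by rw [← haxis]))

theorem exists_conj_iff_ker_eq (V : Subgroup ↥SO3) [IsKleinFour V] {G : Type*} [Group G]
    {f g : G →* V} (hf : Function.Surjective f) (hg : Function.Surjective g) :
    (∃ h : ↥SO3, ∀ x : G, (g x : ↥SO3) = h * f x * h⁻¹) ↔ f.ker = g.ker := by
  constructor
  · rintro ⟨h, hfg⟩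
    ext x
    have hcoe (v : V) : v = 1 ↔ (v : ↥SO3) = 1 := OneMemClass.coe_eq_one.symm
    rw [MonoidHom.mem_ker, MonoidHom.mem_ker, hcoe, hcoe, hfg, conj_eq_one_iff]
  · intro hker
    obtain ⟨α, hα⟩ := MonoidHom.exists_mulEquiv_apply_eq_of_ker_eq hf hg hker
    obtain ⟨h, hh⟩ := exists_conj_eq_of_isKleinFour V α
    exact ⟨h, fun x => by rw [hα, hh]⟩

end SO3

/-- Two surjective homomorphisms from `G` onto a Klein four subgroup `V` of `SO(3)` are
conjugate in `SO(3)` if and only if their components have the same wedge product in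
`⋀²(Hom(G, ℤ/2))`. -/
theorem conjugate_iff_same_wedge {G : Type*} [Group G] (V : Subgroup ↥SO3)
    (e : ↥V ≃* Multiplicative (ZMod 2 × ZMod 2))
    (f g : G →* ↥V) (hf : Function.Surjective f) (hg : Function.Surjective g)
    (f₁ f₂ g₁ g₂ : ↥(HomGZ2 G))
    (hf₁₂ : ∀ x : G,
      Multiplicative.toAdd (e (f x)) = ((f₁ : G → ZMod 2) x, (f₂ : G → ZMod 2) x))
    (hg₁₂ : ∀ x : G,
      Multiplicative.toAdd (e (g x)) = ((g₁ : G → ZMod 2) x, (g₂ : G → ZMod 2) x)) :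
    (∃ h : ↥SO3, ∀ x : G, ((g x : ↥V) : ↥SO3) = h * ((f x : ↥V) : ↥SO3) * h⁻¹) ↔
      ExteriorAlgebra.ι (ZMod 2) f₁ * ExteriorAlgebra.ι (ZMod 2) f₂ =
        ExteriorAlgebra.ι (ZMod 2) g₁ * ExteriorAlgebra.ι (ZMod 2) g₂ := by
  have := IsKleinFour.of_mulEquiv e
  rw [SO3.exists_conj_iff_ker_eq V hf hg]
  constructor
  · intro hker
    obtain ⟨α, hα⟩ := MonoidHom.exists_mulEquiv_apply_eq_of_ker_eq hf hg hker
    refine HomGZ2.ι_mul_ι_eq_of_addEquiv f₁ f₂ g₁ g₂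
      (AddEquiv.toMultiplicative.symm (e.symm.trans (α.trans e))) fun x => ?_
    rw [← hf₁₂, ← hg₁₂, hα]
    simp
  · intro hw
    have hsurj {k : G →* V} (hk : Function.Surjective k) :
        Function.Surjective fun x => Multiplicative.toAdd (e (k x)) :=
      Multiplicative.toAdd.surjective.comp (e.surjective.comp hk)
    ext x
    rw [MonoidHom.mem_ker, MonoidHom.mem_ker, ← e.map_eq_one_iff, ← e.map_eq_one_iff,
      ← toAdd_eq_zero, ← toAdd_eq_zero, hf₁₂, hg₁₂]
    exact HomGZ2.eq_zero_iff_of_ι_mul_ι_eq f₁ f₂ g₁ g₂ (by simpa only [hf₁₂] using hsurj hf)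
      (by simpa only [hg₁₂] using hsurj hg) hw x
end
end
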